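/- arXiv:1307.4383 — 7 statements merged into one kernel-verified Lean document; each statement's English description precedes it below -/
import Mathlib

section
/- If ω, ω' : Z → Y are two z-linear maps inducing equivalent exact sequences of Banach spaces, then their difference ω − ω' can be written as B + L where B : Z → Y is a homogeneous bounded map and L : Z → Y is a linear map; conversely, if ω − ω' = B + L with B homogeneous bounded and L linear, then the induced exact sequences are equivalent. -/
open scoped BigOperators

noncomputable section

/-- A homogeneous map between Banach spaces. -/
def IsHomog {X Y : Type*} [NormedAddCommGroup X] [NormedSpace ℝ X]
    [NormedAddCommGroup Y] [NormedSpace ℝ Y] (f : X → Y) : Prop :=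
  ∀ (c : ℝ) (x : X), f (c • x) = c • f x

/-- `f` satisfies the z-linearity estimate with constant `C`. -/
def ZlinWith {X Y : Type*} [NormedAddCommGroup X] [NormedSpace ℝ X]
    [NormedAddCommGroup Y] [NormedSpace ℝ Y] (f : X → Y) (C : ℝ) : Prop :=
  ∀ (n : ℕ) (x : Fin n → X),
    ‖f (∑ j, x j) - ∑ j, f (x j)‖ ≤ C * ∑ j, ‖x j‖

/-- A z-linear map. -/
def IsZlin {X Y : Type*} [NormedAddCommGroup X] [NormedSpace ℝ X]
    [NormedAddCommGroup Y] [NormedSpace ℝ Y] (f : X → Y) : Prop :=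
  IsHomog f ∧ ∃ C > 0, ZlinWith f C

/-- The z-linearity constant `Z(f)`. -/
noncomputable def zconst {X Y : Type*} [NormedAddCommGroup X] [NormedSpace ℝ X]
    [NormedAddCommGroup Y] [NormedSpace ℝ Y] (f : X → Y) : ℝ :=
  sInf {C : ℝ | 0 ≤ C ∧ ZlinWith f C}

/-- `0 → Y → X → Z → 0` is an exact sequence of Banach spaces. -/
def IsExactSeq {Y X Z : Type*} [NormedAddCommGroup Y] [NormedSpace ℝ Y]
    [NormedAddCommGroup X] [NormedSpace ℝ X]
    [NormedAddCommGroup Z] [NormedSpace ℝ Z]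
    (i : Y →L[ℝ] X) (q : X →L[ℝ] Z) : Prop :=
  Function.Injective i ∧ Function.Surjective q ∧
    LinearMap.range (i : Y →ₗ[ℝ] X) = LinearMap.ker (q : X →ₗ[ℝ] Z)

/-- `ω` is a z-linear map associated with the exact sequence `0 → Y → X → Z → 0`:
it is the difference of a bounded homogeneous selection and a linear selection
of the quotient map. -/
def IsAssoc {Y X Z : Type*} [NormedAddCommGroup Y] [NormedSpace ℝ Y]
    [NormedAddCommGroup X] [NormedSpace ℝ X]
    [NormedAddCommGroup Z] [NormedSpace ℝ Z]
    (ω : Z → Y) (i : Y →L[ℝ] X) (q : X →L[ℝ] Z) : Prop :=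
  IsExactSeq i q ∧
    ∃ (b : Z → X) (l : Z →ₗ[ℝ] X), IsHomog b ∧ (∃ M : ℝ, ∀ z, ‖b z‖ ≤ M * ‖z‖) ∧
      (∀ z, q (b z) = z) ∧ (∀ z, q (l z) = z) ∧ (∀ z, i (ω z) = b z - l z)

/-- Equivalence of two exact sequences with the same subspace and quotient. -/
def SeqEquiv {Y X X' Z : Type*} [NormedAddCommGroup Y] [NormedSpace ℝ Y]
    [NormedAddCommGroup X] [NormedSpace ℝ X]
    [NormedAddCommGroup X'] [NormedSpace ℝ X']
    [NormedAddCommGroup Z] [NormedSpace ℝ Z]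
    (i : Y →L[ℝ] X) (q : X →L[ℝ] Z) (i' : Y →L[ℝ] X') (q' : X' →L[ℝ] Z) : Prop :=
  ∃ T : X →L[ℝ] X', (∀ y, T (i y) = i' y) ∧ (∀ x, q' (T x) = q x)

/-- The exact sequence `0 → Y → X → Z → 0` splits. -/
def Splits {Y X Z : Type*} [NormedAddCommGroup Y] [NormedSpace ℝ Y]
    [NormedAddCommGroup X] [NormedSpace ℝ X]
    [NormedAddCommGroup Z] [NormedSpace ℝ Z]
    (i : Y →L[ℝ] X) (q : X →L[ℝ] Z) : Prop :=
  ∃ r : Z →L[ℝ] X, ∀ z, q (r z) = z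

/-- The exact sequence `0 → Y → X → Z → 0` locally splits: its dual sequence
`0 → Z* → X* → Y* → 0` splits, i.e. the dual `i*` of the embedding admits a
bounded linear section. -/
def LocSplits {Y X Z : Type*} [NormedAddCommGroup Y] [NormedSpace ℝ Y]
    [NormedAddCommGroup X] [NormedSpace ℝ X]
    [NormedAddCommGroup Z] [NormedSpace ℝ Z]
    (i : Y →L[ℝ] X) (q : X →L[ℝ] Z) : Prop :=
  ∃ s : StrongDual ℝ Y →L[ℝ] StrongDual ℝ X,
    ∀ (g : StrongDual ℝ Y) (y : Y), s g (i y) = g y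

/-- The λ-bounded approximation property. -/
def HasBAPWith (X : Type*) [NormedAddCommGroup X] [NormedSpace ℝ X] (l : ℝ) : Prop :=
  ∀ F : Submodule ℝ X, FiniteDimensional ℝ F →
    ∃ T : X →L[ℝ] X, FiniteDimensional ℝ (LinearMap.range (T : X →ₗ[ℝ] X)) ∧
      ‖T‖ ≤ l ∧ ∀ f ∈ F, T f = f

/-- The bounded approximation property. -/
def HasBAP (X : Type*) [NormedAddCommGroup X] [NormedSpace ℝ X] : Prop :=
  ∃ l : ℝ, 1 ≤ l ∧ HasBAPWith X l

/-- A Lindenstrauss–Pełczyński `𝓛₁`-space. -/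
def IsL1Space (E : Type*) [NormedAddCommGroup E] [NormedSpace ℝ E] : Prop :=
  ∃ l : ℝ, 1 ≤ l ∧ ∀ F : Submodule ℝ E, FiniteDimensional ℝ F →
    ∃ G : Submodule ℝ E, F ≤ G ∧ FiniteDimensional ℝ G ∧
      ∃ (n : ℕ) (T : G ≃L[ℝ] PiLp 1 fun _ : Fin n => ℝ),
        ‖T.toContinuousLinearMap‖ * ‖T.symm.toContinuousLinearMap‖ ≤ l

/-- A Lindenstrauss–Pełczyński `𝓛∞`-space. -/
def IsLinftySpace (E : Type*) [NormedAddCommGroup E] [NormedSpace ℝ E] : Prop :=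
  ∃ l : ℝ, 1 ≤ l ∧ ∀ F : Submodule ℝ E, FiniteDimensional ℝ F →
    ∃ G : Submodule ℝ E, F ≤ G ∧ FiniteDimensional ℝ G ∧
      ∃ (n : ℕ) (T : G ≃L[ℝ] PiLp ⊤ fun _ : Fin n => ℝ),
        ‖T.toContinuousLinearMap‖ * ‖T.symm.toContinuousLinearMap‖ ≤ l

open Asymptotics Filter

section

variable {V Z W : Type*} [NormedAddCommGroup V] [NormedSpace ℝ V]
  [NormedAddCommGroup Z] [NormedSpace ℝ Z] [NormedAddCommGroup W]

theorem Asymptotics.IsBigO.comp_continuousLinearMap {f : Z → W} (hf : f =O[⊤] fun z => z)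
    (q : V →L[ℝ] Z) : (fun v => f (q v)) =O[⊤] fun v => v :=
  (hf.comp_tendsto tendsto_top).trans (q.isBigO_id ⊤)

end

namespace IsExactSeq

variable {Y X Z : Type*} [NormedAddCommGroup Y] [NormedSpace ℝ Y]
  [NormedAddCommGroup X] [NormedSpace ℝ X] [NormedAddCommGroup Z] [NormedSpace ℝ Z]
  {i : Y →L[ℝ] X} {q : X →L[ℝ] Z}

theorem apply_apply_eq_zero (hs : IsExactSeq i q) (y : Y) : q (i y) = 0 :=
  (hs.2.2 ▸ LinearMap.mem_range_self (i : Y →ₗ[ℝ] X) y : i y ∈ LinearMap.ker (q : X →ₗ[ℝ] Z))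

theorem mem_range_of_apply_eq_zero (hs : IsExactSeq i q) {x : X} (hx : q x = 0) :
    x ∈ LinearMap.range (i : Y →ₗ[ℝ] X) :=
  hs.2.2 ▸ hx

/-- By the open mapping theorem, as `i` is injective with closed range `ker q`. -/
theorem isBigO_self_embedding [CompleteSpace Y] [CompleteSpace X] (hs : IsExactSeq i q) :
    (fun y => y) =O[⊤] i := by
  have hclosed : IsClosed (Set.range i) := by
    have hrange : Set.range i = (LinearMap.ker (q : X →ₗ[ℝ] Z) : Set X) := by
      rw [← hs.2.2]; rfl
    exact hrange ▸ q.isClosed_ker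
  obtain ⟨K, hK⟩ := i.antilipschitz_of_injective_of_isClosed_range hs.1 hclosed
  exact isBigO_top.2 ⟨K, i.bound_of_antilipschitz hK⟩

theorem isBigO_of_isBigO_embedding [CompleteSpace Y] [CompleteSpace X] (hs : IsExactSeq i q)
    {V F : Type*} [Norm F] {f : V → Y} {g : V → F} (h : (fun v => i (f v)) =O[⊤] g) :
    f =O[⊤] g :=
  (hs.isBigO_self_embedding.comp_tendsto tendsto_top).trans h

theorem exists_linearMap_lift (hs : IsExactSeq i q) {V : Type*} [AddCommGroup V] [Module ℝ V]
    (f : V →ₗ[ℝ] X) (hf : ∀ v, q (f v) = 0) : ∃ g : V →ₗ[ℝ] Y, ∀ v, i (g v) = f v := by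
  let e := LinearEquiv.ofInjective (i : Y →ₗ[ℝ] X) hs.1
  refine ⟨e.symm.toLinearMap ∘ₗ f.codRestrict _ fun v => hs.mem_range_of_apply_eq_zero (hf v),
    fun v => ?_⟩
  exact congrArg Subtype.val (e.apply_symm_apply ⟨f v, _⟩)

theorem exists_isHomog_lift (hs : IsExactSeq i q) {V : Type*} [NormedAddCommGroup V]
    [NormedSpace ℝ V] {f : V → X} (hf : IsHomog f) (hqf : ∀ v, q (f v) = 0) :
    ∃ g : V → Y, IsHomog g ∧ ∀ v, i (g v) = f v := by
  choose g hg using fun v => hs.mem_range_of_apply_eq_zero (hqf v)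
  replace hg : ∀ v, i (g v) = f v := hg
  refine ⟨g, fun c v => hs.1 ?_, hg⟩
  rw [hg, map_smul, hg, hf]

end IsExactSeq

section Equivalence

variable {Y X X' Z : Type*} [NormedAddCommGroup Y] [NormedSpace ℝ Y] [CompleteSpace Y]
  [NormedAddCommGroup X] [NormedSpace ℝ X] [NormedAddCommGroup X'] [NormedSpace ℝ X']
  [NormedAddCommGroup Z] [NormedSpace ℝ Z]
  {ω ω' : Z → Y} {i : Y →L[ℝ] X} {q : X →L[ℝ] Z} {i' : Y →L[ℝ] X'} {q' : X' →L[ℝ] Z}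

/-- If `T` is the equivalence, `B` and `L` are the lifts of `T ∘ b - b'` and `l' - T ∘ l`. -/
theorem SeqEquiv.exists_sub_eq_isHomog_add_isLinearMap [CompleteSpace X']
    (hT : SeqEquiv i q i' q') (h : IsAssoc ω i q) (h' : IsAssoc ω' i' q') :
    ∃ B L : Z → Y, IsHomog B ∧ (∃ M : ℝ, ∀ z, ‖B z‖ ≤ M * ‖z‖) ∧
      IsLinearMap ℝ L ∧ ∀ z, ω z - ω' z = B z + L z := by
  obtain ⟨T, hTi, hTq⟩ := hT
  obtain ⟨-, b, l, hb, hbM, hqb, hql, hibl⟩ := h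
  obtain ⟨hs', b', l', hb', hbM', hqb', hql', hibl'⟩ := h'
  obtain ⟨B, hB, hiB⟩ := hs'.exists_isHomog_lift (f := fun z => T (b z) - b' z)
    (fun c z => by simp only [hb c z, hb' c z, map_smul, smul_sub])
    (fun z => by simp only [map_sub, hTq, hqb, hqb', sub_self])
  obtain ⟨L, hiL⟩ := hs'.exists_linearMap_lift (l' - (T : X →ₗ[ℝ] X') ∘ₗ l)
    (fun z => by simp [hTq, hql, hql'])
  have hBO : B =O[⊤] fun z => z := by
    refine hs'.isBigO_of_isBigO_embedding ?_
    simp_rw [hiB]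
    exact ((T.isBigO_comp _ _).trans (isBigO_top.2 hbM)).sub (isBigO_top.2 hbM')
  refine ⟨B, L, hB, isBigO_top.1 hBO, L.isLinear, fun z => hs'.1 ?_⟩
  have hTω : i' (ω z) = T (b z) - T (l z) := by rw [← hTi, hibl, map_sub]
  simp only [map_sub, map_add, hTω, hibl', hiB, hiL, LinearMap.sub_apply,
    LinearMap.comp_apply, ContinuousLinearMap.coe_coe]
  abel

/-- With `r` the linear retraction `x ↦ i⁻¹ (x - l (q x))`, the equivalence is
`T = i' ∘ (r - L ∘ q) + l' ∘ q`; it is bounded because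
`T x = i' (r x - ω (q x)) + i' (B (q x)) + b' (q x)` and `i (r x - ω (q x)) = x - b (q x)`. -/
theorem IsAssoc.seqEquiv_of_sub_eq_isHomog_add_isLinearMap [CompleteSpace X]
    (h : IsAssoc ω i q) (h' : IsAssoc ω' i' q') {B L : Z → Y}
    (hB : ∃ M : ℝ, ∀ z, ‖B z‖ ≤ M * ‖z‖) (hL : IsLinearMap ℝ L)
    (hdiff : ∀ z, ω z - ω' z = B z + L z) : SeqEquiv i q i' q' := by
  obtain ⟨hs, b, l, -, hbM, -, hql, hibl⟩ := h
  obtain ⟨hs', b', l', -, hbM', -, hql', hibl'⟩ := h'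
  obtain ⟨r, hr⟩ := hs.exists_linearMap_lift (LinearMap.id - (l ∘ₗ (q : X →ₗ[ℝ] Z)))
    (fun x => by simp [hql])
  let T : X →ₗ[ℝ] X' :=
    (i' : Y →ₗ[ℝ] X') ∘ₗ (r - hL.mk' L ∘ₗ (q : X →ₗ[ℝ] Z)) + l' ∘ₗ (q : X →ₗ[ℝ] Z)
  have hTx : ∀ x, T x = i' (r x - ω (q x)) + i' (B (q x)) + b' (q x) := fun x => by
    have hLq : L (q x) = ω (q x) - ω' (q x) - B (q x) := eq_sub_of_add_eq' (hdiff _).symm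
    have hb'q : b' (q x) = i' (ω' (q x)) + l' (q x) := by rw [hibl']; abel
    simp only [T, LinearMap.add_apply, LinearMap.comp_apply, LinearMap.sub_apply,
      IsLinearMap.mk'_apply, ContinuousLinearMap.coe_coe, hLq, hb'q, map_sub]
    abel
  have hir : ∀ x, i (r x - ω (q x)) = x - b (q x) := fun x => by
    rw [map_sub, hr, hibl]
    simp only [LinearMap.sub_apply, LinearMap.id_apply, LinearMap.comp_apply,
      ContinuousLinearMap.coe_coe]
    abel
  have hTO : T =O[⊤] fun x => x := by
    have hrω : (fun x => r x - ω (q x)) =O[⊤] fun x => x := by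
      refine hs.isBigO_of_isBigO_embedding ?_
      simp_rw [hir]
      exact (isBigO_refl _ _).sub ((isBigO_top.2 hbM).comp_continuousLinearMap q)
    rw [show ⇑T = _ from funext hTx]
    exact (((i'.isBigO_comp _ _).trans hrω).add ((i'.isBigO_comp _ _).trans
      ((isBigO_top.2 hB).comp_continuousLinearMap q))).add
      ((isBigO_top.2 hbM').comp_continuousLinearMap q)
  refine ⟨T.mkContinuousOfExistsBound (isBigO_top.1 hTO), fun y => ?_, fun x => ?_⟩
  · have hri : r (i y) = y := hs.1 (by simp [hr, hs.apply_apply_eq_zero])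
    simp [T, hri, hs.apply_apply_eq_zero, hL.map_zero]
  · simp [T, hs'.apply_apply_eq_zero, hql']

end Equivalence

theorem statement0_general {Y Z X X' : Type*}
    [NormedAddCommGroup Y] [NormedSpace ℝ Y] [CompleteSpace Y]
    [NormedAddCommGroup Z] [NormedSpace ℝ Z]
    [NormedAddCommGroup X] [NormedSpace ℝ X] [CompleteSpace X]
    [NormedAddCommGroup X'] [NormedSpace ℝ X'] [CompleteSpace X']
    (ω ω' : Z → Y)
    (i : Y →L[ℝ] X) (q : X →L[ℝ] Z) (i' : Y →L[ℝ] X') (q' : X' →L[ℝ] Z)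
    (h : IsAssoc ω i q) (h' : IsAssoc ω' i' q') :
    SeqEquiv i q i' q' ↔
      ∃ B L : Z → Y, IsHomog B ∧ (∃ M : ℝ, ∀ z, ‖B z‖ ≤ M * ‖z‖) ∧
        IsLinearMap ℝ L ∧ ∀ z, ω z - ω' z = B z + L z :=
  ⟨fun hT => hT.exists_sub_eq_isHomog_add_isLinearMap h h',
    fun ⟨_, _, _, hB, hL, hdiff⟩ => h.seqEquiv_of_sub_eq_isHomog_add_isLinearMap h' hB hL hdiff⟩

/-- Two z-linear maps induce equivalent exact sequences iff their difference is
the sum of a bounded homogeneous map and a linear map. -/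
theorem statement0 {Y Z X X' : Type*}
    [NormedAddCommGroup Y] [NormedSpace ℝ Y] [CompleteSpace Y]
    [NormedAddCommGroup Z] [NormedSpace ℝ Z] [CompleteSpace Z]
    [NormedAddCommGroup X] [NormedSpace ℝ X] [CompleteSpace X]
    [NormedAddCommGroup X'] [NormedSpace ℝ X'] [CompleteSpace X']
    (ω ω' : Z → Y) (hω : IsZlin ω) (hω' : IsZlin ω')
    (i : Y →L[ℝ] X) (q : X →L[ℝ] Z) (i' : Y →L[ℝ] X') (q' : X' →L[ℝ] Z)
    (h : IsAssoc ω i q) (h' : IsAssoc ω' i' q') :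
    SeqEquiv i q i' q' ↔
      ∃ B L : Z → Y, IsHomog B ∧ (∃ M : ℝ, ∀ z, ‖B z‖ ≤ M * ‖z‖) ∧
        IsLinearMap ℝ L ∧ ∀ z, ω z - ω' z = B z + L z :=
  statement0_general ω ω' i q i' q' h h'

end
end

section
/- For a z-linear map ω : Z → Y, the quasi-norm ‖(y,z)‖_ω = ‖y − ωz‖ + ‖z‖ on Y × Z is equivalent to a norm, and the maps j(y) = (y,0) and p(y,z) = z realize an exact sequence 0 → Y → Y ⊕_ω Z → Z → 0 of Banach spaces. -/
open scoped BigOperators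

noncomputable section

/-!
The norm is the convexification `N p = inf ∑ ‖pᵢ‖_ω` over finite decompositions `p = ∑ pᵢ`.
It lies below the quasi-norm, and the z-linearity estimate applied to the second coordinates of a
decomposition gives `‖p‖_ω ≤ (1 + C) N p`, so `N` is an equivalent norm.
For completeness, if `(yₙ, zₙ)` is Cauchy then `zₙ → z`, and the corrected first coordinates
`yₙ - ω (zₙ - z)` form a Cauchy sequence by the two-term z-linearity estimate; their limit `y`
gives the limit `(y, z)`.
-/

open Filter Topology

theorem IsHomog.map_zero {X Y : Type*} [NormedAddCommGroup X] [NormedSpace ℝ X]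
    [NormedAddCommGroup Y] [NormedSpace ℝ Y] {f : X → Y} (h : IsHomog f) : f 0 = 0 := by
  simpa using h 0 0

theorem ZlinWith.norm_map_add_sub_le {X Y : Type*} [NormedAddCommGroup X] [NormedSpace ℝ X]
    [NormedAddCommGroup Y] [NormedSpace ℝ Y] {f : X → Y} {C : ℝ} (h : ZlinWith f C) (a b : X) :
    ‖f (a + b) - f a - f b‖ ≤ C * (‖a‖ + ‖b‖) := by
  simpa [Fin.sum_univ_two, sub_sub] using h 2 ![a, b]

namespace TwistedSum

section Convexification

variable {Y Z : Type*} [NormedAddCommGroup Y] [NormedAddCommGroup Z] {ω : Z → Y}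

def quasiNorm (ω : Z → Y) (p : Y × Z) : ℝ := ‖p.1 - ω p.2‖ + ‖p.2‖

def decompositionSums (ω : Z → Y) (p : Y × Z) : Set ℝ :=
  {s | ∃ (n : ℕ) (q : Fin n → Y × Z), ∑ i, q i = p ∧ s = ∑ i, quasiNorm ω (q i)}

def hullNorm (ω : Z → Y) (p : Y × Z) : ℝ := sInf (decompositionSums ω p)

theorem quasiNorm_nonneg (ω : Z → Y) (p : Y × Z) : 0 ≤ quasiNorm ω p := by
  unfold quasiNorm; positivity

theorem quasiNorm_mem_decompositionSums (ω : Z → Y) (p : Y × Z) :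
    quasiNorm ω p ∈ decompositionSums ω p :=
  ⟨1, fun _ => p, by simp, by simp⟩

theorem decompositionSums_nonempty (ω : Z → Y) (p : Y × Z) :
    (decompositionSums ω p).Nonempty :=
  ⟨_, quasiNorm_mem_decompositionSums ω p⟩

theorem nonneg_of_mem_decompositionSums {p : Y × Z} {s : ℝ} (hs : s ∈ decompositionSums ω p) :
    0 ≤ s := by
  obtain ⟨n, q, -, rfl⟩ := hs
  exact Finset.sum_nonneg fun i _ => quasiNorm_nonneg ω (q i)

theorem decompositionSums_bddBelow (ω : Z → Y) (p : Y × Z) :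
    BddBelow (decompositionSums ω p) :=
  ⟨0, fun _ => nonneg_of_mem_decompositionSums⟩

theorem add_mem_decompositionSums {p p' : Y × Z} {s s' : ℝ} (hs : s ∈ decompositionSums ω p)
    (hs' : s' ∈ decompositionSums ω p') : s + s' ∈ decompositionSums ω (p + p') := by
  obtain ⟨n, q, rfl, rfl⟩ := hs
  obtain ⟨n', q', rfl, rfl⟩ := hs'
  refine ⟨n + n', Fin.append q q', ?_, ?_⟩ <;> simp [Fin.sum_univ_add]

theorem hullNorm_nonneg (ω : Z → Y) (p : Y × Z) : 0 ≤ hullNorm ω p :=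
  le_csInf (decompositionSums_nonempty ω p) fun _ => nonneg_of_mem_decompositionSums

theorem hullNorm_le_quasiNorm (ω : Z → Y) (p : Y × Z) : hullNorm ω p ≤ quasiNorm ω p :=
  csInf_le (decompositionSums_bddBelow ω p) (quasiNorm_mem_decompositionSums ω p)

theorem hullNorm_add_le (ω : Z → Y) (p p' : Y × Z) :
    hullNorm ω (p + p') ≤ hullNorm ω p + hullNorm ω p' := by
  rw [← sub_le_iff_le_add]
  refine le_csInf (decompositionSums_nonempty ω p) fun s hs => ?_
  rw [sub_le_comm]
  refine le_csInf (decompositionSums_nonempty ω p') fun s' hs' => ?_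
  rw [sub_le_iff_le_add']
  exact csInf_le (decompositionSums_bddBelow ω _) (add_mem_decompositionSums hs hs')

variable [NormedSpace ℝ Y] [NormedSpace ℝ Z] {C : ℝ}

theorem quasiNorm_smul (hω : IsHomog ω) (c : ℝ) (p : Y × Z) :
    quasiNorm ω (c • p) = |c| * quasiNorm ω p := by
  simp only [quasiNorm, Prod.smul_fst, Prod.smul_snd, hω c p.2, ← smul_sub, norm_smul,
    Real.norm_eq_abs, mul_add]

theorem eq_zero_of_quasiNorm_le_zero (hω : IsHomog ω) {p : Y × Z} (hp : quasiNorm ω p ≤ 0) :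
    p = 0 := by
  unfold quasiNorm at hp
  have h2 : p.2 = 0 := norm_le_zero_iff.1 <| by linarith [norm_nonneg (p.1 - ω p.2)]
  have h1 : p.1 - ω p.2 = 0 := norm_le_zero_iff.1 <| by linarith [norm_nonneg p.2]
  rw [h2, hω.map_zero, sub_zero] at h1
  exact Prod.ext h1 h2

theorem quasiNorm_sum_le (hC : 0 ≤ C) (h : ZlinWith ω C) {n : ℕ} (q : Fin n → Y × Z) :
    quasiNorm ω (∑ i, q i) ≤ (1 + C) * ∑ i, quasiNorm ω (q i) := by
  set a := ∑ i, ‖(q i).1 - ω (q i).2‖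
  set b := ∑ i, ‖(q i).2‖
  have hfst : ‖∑ i, (q i).1 - ω (∑ i, (q i).2)‖ ≤ a + C * b :=
    calc ‖∑ i, (q i).1 - ω (∑ i, (q i).2)‖
        = ‖∑ i, ((q i).1 - ω (q i).2) - (ω (∑ i, (q i).2) - ∑ i, ω (q i).2)‖ := by
          rw [Finset.sum_sub_distrib]; abel_nf
      _ ≤ a + C * b := (norm_sub_le _ _).trans (add_le_add (norm_sum_le _ _) (h n _))
  have hsum : ∑ i, quasiNorm ω (q i) = a + b := Finset.sum_add_distrib
  have hb : 0 ≤ b := by positivity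
  have ha : 0 ≤ a := by positivity
  rw [hsum]
  simp only [quasiNorm, Prod.fst_sum, Prod.snd_sum]
  nlinarith [norm_sum_le Finset.univ fun i => (q i).2]

theorem quasiNorm_le_hullNorm (hC : 0 ≤ C) (h : ZlinWith ω C) (p : Y × Z) :
    quasiNorm ω p ≤ (1 + C) * hullNorm ω p := by
  rw [← div_le_iff₀' (by positivity)]
  refine le_csInf (decompositionSums_nonempty ω p) ?_
  rintro _ ⟨n, q, rfl, rfl⟩
  rw [div_le_iff₀' (by positivity)]
  exact quasiNorm_sum_le hC h q

theorem smul_mem_decompositionSums (hω : IsHomog ω) (c : ℝ) {p : Y × Z} {s : ℝ}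
    (hs : s ∈ decompositionSums ω p) : |c| * s ∈ decompositionSums ω (c • p) := by
  obtain ⟨n, q, rfl, rfl⟩ := hs
  refine ⟨n, fun i => c • q i, by rw [Finset.smul_sum], ?_⟩
  simp only [quasiNorm_smul hω, Finset.mul_sum]

theorem hullNorm_smul_le (hω : IsHomog ω) (c : ℝ) (p : Y × Z) :
    hullNorm ω (c • p) ≤ |c| * hullNorm ω p := by
  rw [hullNorm, hullNorm, ← smul_eq_mul, ← Real.sInf_smul_of_nonneg (abs_nonneg c)]
  refine csInf_le_csInf (decompositionSums_bddBelow ω _)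
    ((decompositionSums_nonempty ω p).smul_set) ?_
  rintro _ ⟨s, hs, rfl⟩
  exact smul_mem_decompositionSums hω c hs

theorem hullNorm_smul (hω : IsHomog ω) (c : ℝ) (p : Y × Z) :
    hullNorm ω (c • p) = |c| * hullNorm ω p := by
  rcases eq_or_ne c 0 with rfl | hc
  · simpa using (hullNorm_smul_le hω 0 p).antisymm (by simpa using hullNorm_nonneg ω 0)
  refine le_antisymm (hullNorm_smul_le hω c p) ?_
  calc |c| * hullNorm ω p = |c| * hullNorm ω (c⁻¹ • c • p) := by rw [inv_smul_smul₀ hc]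
    _ ≤ |c| * (|c⁻¹| * hullNorm ω (c • p)) := by gcongr; exact hullNorm_smul_le hω _ _
    _ = hullNorm ω (c • p) := by rw [abs_inv, mul_inv_cancel_left₀ (abs_ne_zero.2 hc)]

end Convexification

section Completeness

variable {Y Z : Type*} [NormedAddCommGroup Y] [NormedSpace ℝ Y] [CompleteSpace Y]
  [NormedAddCommGroup Z] [NormedSpace ℝ Z] [CompleteSpace Z] {ω : Z → Y} {C : ℝ}

theorem exists_tendsto_quasiNorm_sub (h : ZlinWith ω C) {f : ℕ → Y × Z}
    (hf : Tendsto (fun n : ℕ × ℕ => quasiNorm ω (f n.1 - f n.2)) atTop (𝓝 0)) :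
    ∃ p, Tendsto (fun n => quasiNorm ω (f n - p)) atTop (𝓝 0) := by
  have hz_cauchy : CauchySeq fun n => (f n).2 := by
    refine cauchySeq_iff_tendsto_dist_atTop_0.2
      (squeeze_zero (fun _ => dist_nonneg) (fun n => ?_) hf)
    rw [dist_eq_norm]
    exact le_add_of_nonneg_left (norm_nonneg _)
  obtain ⟨z, hz⟩ := cauchySeq_tendsto_of_complete hz_cauchy
  have hz_norm := tendsto_iff_norm_sub_tendsto_zero.1 hz
  set w : ℕ → Y := fun n => (f n).1 - ω ((f n).2 - z)
  have hw_dist : ∀ m n, dist (w m) (w n) ≤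
      quasiNorm ω (f m - f n) + C * (‖(f m).2 - (f n).2‖ + ‖(f n).2 - z‖) := by
    intro m n
    have hzlin := h.norm_map_add_sub_le ((f m).2 - (f n).2) ((f n).2 - z)
    rw [sub_add_sub_cancel] at hzlin
    calc dist (w m) (w n)
        = ‖((f m).1 - (f n).1 - ω ((f m).2 - (f n).2)) -
            (ω ((f m).2 - z) - ω ((f m).2 - (f n).2) - ω ((f n).2 - z))‖ := by
          rw [dist_eq_norm]; congr 1; simp only [w]; abel
      _ ≤ _ := (norm_sub_le _ _).trans (add_le_add (le_add_of_nonneg_right (norm_nonneg _)) hzlin)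
  have hw_cauchy : CauchySeq w := by
    refine cauchySeq_iff_tendsto_dist_atTop_0.2
      (squeeze_zero (fun _ => dist_nonneg) (fun n => hw_dist n.1 n.2) ?_)
    have hz_pairs := cauchySeq_iff_tendsto_dist_atTop_0.1 hz_cauchy
    simp only [dist_eq_norm] at hz_pairs
    have hsnd : Tendsto (fun n : ℕ × ℕ => n.2) atTop atTop := by
      rw [← prod_atTop_atTop_eq]; exact tendsto_snd
    simpa using hf.add (tendsto_const_nhds.mul (hz_pairs.add (hz_norm.comp hsnd)))
  obtain ⟨y, hy⟩ := cauchySeq_tendsto_of_complete hw_cauchy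
  have hsplit : ∀ n, quasiNorm ω (f n - (y, z)) = ‖w n - y‖ + ‖(f n).2 - z‖ := fun n => by
    simp only [quasiNorm, w, Prod.fst_sub, Prod.snd_sub]
    congr 2; abel
  exact ⟨(y, z), by simpa [hsplit] using (tendsto_iff_norm_sub_tendsto_zero.1 hy).add hz_norm⟩

theorem hullNorm_complete (hC : 0 ≤ C) (h : ZlinWith ω C) (f : ℕ → Y × Z)
    (hf : ∀ ε > (0:ℝ), ∃ k, ∀ m ≥ k, ∀ n ≥ k, hullNorm ω (f m - f n) < ε) :
    ∃ p, ∀ ε > (0:ℝ), ∃ k, ∀ n ≥ k, hullNorm ω (f n - p) < ε := by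
  have hN : Tendsto (fun n : ℕ × ℕ => hullNorm ω (f n.1 - f n.2)) atTop (𝓝 0) := by
    refine tendsto_order.2
      ⟨fun a ha => .of_forall fun _ => ha.trans_le (hullNorm_nonneg ω _), fun ε hε => ?_⟩
    obtain ⟨k, hk⟩ := hf ε hε
    exact eventually_atTop.2 ⟨(k, k), fun n hn => hk _ hn.1 _ hn.2⟩
  obtain ⟨p, hp⟩ := exists_tendsto_quasiNorm_sub h <|
    squeeze_zero (fun _ => quasiNorm_nonneg ω _) (fun _ => quasiNorm_le_hullNorm hC h _)
      (by simpa using hN.const_mul (1 + C))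
  refine ⟨p, fun ε hε => ?_⟩
  obtain ⟨k, hk⟩ := eventually_atTop.1 (hp.eventually (gt_mem_nhds hε))
  exact ⟨k, fun n hn => (hullNorm_le_quasiNorm ω _).trans_lt (hk n hn)⟩

end Completeness

end TwistedSum

open TwistedSum

/-- The quasi-norm `‖(y,z)‖_ω = ‖y − ωz‖ + ‖z‖` of a z-linear map `ω` is
equivalent to a norm making `Y ⊕_ω Z` a Banach space, and `j y = (y,0)`,
`p (y,z) = z` realize an exact sequence `0 → Y → Y ⊕_ω Z → Z → 0`. -/
theorem statement1 {Y Z : Type*}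
    [NormedAddCommGroup Y] [NormedSpace ℝ Y] [CompleteSpace Y]
    [NormedAddCommGroup Z] [NormedSpace ℝ Z] [CompleteSpace Z]
    (ω : Z → Y) (hω : IsZlin ω) :
    ∃ N : Y × Z → ℝ,
      -- N is a norm
      (∀ p, 0 ≤ N p) ∧ (∀ p, N p = 0 → p = 0) ∧
      (∀ p p', N (p + p') ≤ N p + N p') ∧
      (∀ (c : ℝ) (p : Y × Z), N (c • p) = |c| * N p) ∧
      -- N is equivalent to the quasi-norm
      (∃ c₁ > (0:ℝ), ∃ c₂ > (0:ℝ), ∀ p : Y × Z,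
        c₁ * (‖p.1 - ω p.2‖ + ‖p.2‖) ≤ N p ∧
        N p ≤ c₂ * (‖p.1 - ω p.2‖ + ‖p.2‖)) ∧
      -- the space is complete for N
      (∀ f : ℕ → Y × Z,
        (∀ ε > (0:ℝ), ∃ k, ∀ m ≥ k, ∀ n ≥ k, N (f m - f n) < ε) →
        ∃ p, ∀ ε > (0:ℝ), ∃ k, ∀ n ≥ k, N (f n - p) < ε) ∧
      -- j and p realize an exact sequence of Banach spaces
      Function.Injective (fun y : Y => ((y, 0) : Y × Z)) ∧
      (∀ p : Y × Z, p.2 = 0 ↔ ∃ y : Y, p = (y, 0)) ∧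
      Function.Surjective (fun p : Y × Z => p.2) ∧
      (∃ M : ℝ, ∀ y : Y, N (y, 0) ≤ M * ‖y‖) ∧
      (∃ M : ℝ, ∀ p : Y × Z, ‖p.2‖ ≤ M * N p) := by
  obtain ⟨hhom, C, hC, hzl⟩ := hω
  have hquasi (p : Y × Z) : quasiNorm ω p ≤ (1 + C) * hullNorm ω p :=
    quasiNorm_le_hullNorm hC.le hzl p
  refine ⟨hullNorm ω, hullNorm_nonneg ω, fun p hp => ?_, hullNorm_add_le ω,
    hullNorm_smul hhom, ⟨(1 + C)⁻¹, by positivity, 1, one_pos, fun p => ⟨?_, ?_⟩⟩,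
    hullNorm_complete hC.le hzl, Prod.mk_left_injective 0,
    fun p => ⟨fun h => ⟨p.1, Prod.ext rfl h⟩, by rintro ⟨y, rfl⟩; rfl⟩, Prod.snd_surjective,
    ⟨1, fun y => ?_⟩,
    ⟨1 + C, fun p => (le_add_of_nonneg_left (norm_nonneg _)).trans (hquasi p)⟩⟩
  · exact eq_zero_of_quasiNorm_le_zero hhom (by simpa [hp] using hquasi p)
  · exact (inv_mul_le_iff₀ (by positivity)).2 (hquasi p)
  · rw [one_mul]; exact hullNorm_le_quasiNorm ω p
  · simpa [quasiNorm, hhom.map_zero] using hullNorm_le_quasiNorm ω (y, 0)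
end
end

section
/- Given a commutative diagram of exact sequences of Banach spaces with rows 0 → Y → X → Z → 0 (associated to a z-linear map ω) and 0 → Y → X' → Z' → 0, with identity on Y, a vertical operator T : X' → X and γ : Z' → Z, the lower sequence is associated with the z-linear map ωγ. -/
open scoped BigOperators

noncomputable section

/-
The middle space `X'` of the lower row is the pullback of `q` and `γ`: the map
`x' ↦ (T x', q' x')` is injective with range `{(x, z') | q x = γ z'}`, a closed subspace of
`X × Z'`, so by the open mapping theorem it is an isomorphism onto that range. Lifting the
bounded homogeneous selection `b ∘ γ` through it gives a bounded homogeneous selection `b'`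
of `q'`, and `l' := b' - i' ∘ ω ∘ γ` lifts the linear map `l ∘ γ`, hence is linear.
-/

section Pullback

variable {R Y X Z X' Z' : Type*} [Ring R]
  [AddCommGroup Y] [Module R Y] [AddCommGroup X] [Module R X] [AddCommGroup Z] [Module R Z]
  [AddCommGroup X'] [Module R X'] [AddCommGroup Z'] [Module R Z']
  {i : Y →ₗ[R] X} {q : X →ₗ[R] Z} {i' : Y →ₗ[R] X'} {q' : X' →ₗ[R] Z'}
  {T : X' →ₗ[R] X} {γ : Z' →ₗ[R] Z}

theorem injective_pair_of_comm (hi : Function.Injective i)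
    (hker' : LinearMap.ker q' ≤ LinearMap.range i') (hcomm1 : ∀ y, T (i' y) = i y) :
    Function.Injective fun x' => (T x', q' x') := by
  show Function.Injective (T.prod q')
  rw [injective_iff_map_eq_zero]
  intro x' hx'
  obtain ⟨y, rfl⟩ := hker' (congrArg Prod.snd hx')
  have hy : i y = 0 := by rw [← hcomm1]; exact congrArg Prod.fst hx'
  rw [hi (hy.trans i.map_zero.symm), map_zero]

theorem range_pair_eq_pullback (hker : LinearMap.ker q ≤ LinearMap.range i)
    (hq' : Function.Surjective q') (hqi' : ∀ y, q' (i' y) = 0) (hcomm1 : ∀ y, T (i' y) = i y)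
    (hcomm2 : ∀ x', q (T x') = γ (q' x')) :
    Set.range (fun x' => (T x', q' x')) = {p : X × Z' | q p.1 = γ p.2} := by
  ext ⟨x, z'⟩
  constructor
  · rintro ⟨x', hx'⟩
    simp only [Prod.mk.injEq] at hx'
    simp only [Set.mem_ofPred_eq, ← hx'.1, ← hx'.2, hcomm2]
  · intro hxz
    obtain ⟨x₀, rfl⟩ := hq' z'
    have hdiff : x - T x₀ ∈ LinearMap.ker q := by
      simp only [LinearMap.mem_ker, map_sub, hcomm2, sub_eq_zero]
      exact hxz
    obtain ⟨y, hy⟩ := hker hdiff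
    refine ⟨x₀ + i' y, ?_⟩
    simp [hcomm1, hy, hqi']

theorem isLinearMap_of_pullback (hΦ : Function.Injective fun x' => (T x', q' x'))
    {g : Z' → X'} (f : Z' →ₗ[R] X) (hTg : ∀ z', T (g z') = f z') (hqg : ∀ z', q' (g z') = z') :
    IsLinearMap R g where
  map_add a c := hΦ <| by simp [hTg, hqg]
  map_smul c a := hΦ <| by simp [hTg, hqg]

end Pullback

theorem exists_bound_comp_continuousLinearMap {𝕜 E F G : Type*} [NontriviallyNormedField 𝕜]
    [SeminormedAddCommGroup E] [NormedSpace 𝕜 E] [SeminormedAddCommGroup F] [NormedSpace 𝕜 F]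
    [SeminormedAddCommGroup G] {f : E → G} (hf : ∃ M, ∀ x, ‖f x‖ ≤ M * ‖x‖) (γ : F →L[𝕜] E) :
    ∃ M, ∀ x, ‖f (γ x)‖ ≤ M * ‖x‖ := by
  obtain ⟨M, hM⟩ := hf
  refine ⟨|M| * ‖γ‖, fun x => ?_⟩
  calc ‖f (γ x)‖ ≤ M * ‖γ x‖ := hM _
    _ ≤ |M| * (‖γ‖ * ‖x‖) := by gcongr; exacts [le_abs_self M, γ.le_opNorm x]
    _ = |M| * ‖γ‖ * ‖x‖ := by ring

section Normed

variable {Y X Z X' Z' : Type*}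
  [NormedAddCommGroup Y] [NormedSpace ℝ Y] [NormedAddCommGroup X] [NormedSpace ℝ X]
  [NormedAddCommGroup Z] [NormedSpace ℝ Z] [NormedAddCommGroup X'] [NormedSpace ℝ X']
  [NormedAddCommGroup Z'] [NormedSpace ℝ Z']

theorem IsExactSeq.apply_apply_eq_zero_s5 {i : Y →L[ℝ] X} {q : X →L[ℝ] Z} (h : IsExactSeq i q)
    (y : Y) : q (i y) = 0 :=
  h.2.2.le ⟨y, rfl⟩

theorem IsHomog.comp_continuousLinearMap {f : Z → X} (hf : IsHomog f) (γ : Z' →L[ℝ] Z) :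
    IsHomog fun z' => f (γ z') := fun c z' => by
  simp only [map_smul, hf c]

variable {T : X' →L[ℝ] X} {q' : X' →L[ℝ] Z'}

theorem isHomog_of_pullback (hΦ : Function.Injective fun x' => (T x', q' x'))
    {g : Z' → X'} {f : Z' → X} (hf : IsHomog f) (hTg : ∀ z', T (g z') = f z')
    (hqg : ∀ z', q' (g z') = z') : IsHomog g :=
  fun c z' => hΦ <| by simp [hTg, hqg, hf c z']

theorem exists_bound_of_pullback [CompleteSpace X'] [CompleteSpace X] [CompleteSpace Z']
    (hΦ : Function.Injective fun x' => (T x', q' x'))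
    (hclosed : IsClosed (Set.range fun x' => (T x', q' x')))
    {g : Z' → X'} {f : Z' → X} (hf : ∃ M, ∀ z', ‖f z'‖ ≤ M * ‖z'‖)
    (hTg : ∀ z', T (g z') = f z') (hqg : ∀ z', q' (g z') = z') :
    ∃ M, ∀ z', ‖g z'‖ ≤ M * ‖z'‖ := by
  obtain ⟨K, hK⟩ := (T.prod q').antilipschitz_of_injective_of_isClosed_range hΦ hclosed
  obtain ⟨M, hM⟩ := hf
  refine ⟨K * (|M| + 1), fun z' => ?_⟩
  calc ‖g z'‖ ≤ K * ‖(T (g z'), q' (g z'))‖ := (T.prod q').bound_of_antilipschitz hK _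
    _ = K * max ‖f z'‖ ‖z'‖ := by rw [hTg, hqg, Prod.norm_mk]
    _ ≤ K * ((|M| + 1) * ‖z'‖) := by
      gcongr
      refine max_le ((hM z').trans ?_) ?_ <;>
        nlinarith [le_abs_self M, abs_nonneg M, norm_nonneg z']
    _ = K * (|M| + 1) * ‖z'‖ := by ring

end Normed

theorem statement5_general {Y X Z X' Z' : Type*}
    [NormedAddCommGroup Y] [NormedSpace ℝ Y]
    [NormedAddCommGroup X] [NormedSpace ℝ X] [CompleteSpace X]
    [NormedAddCommGroup Z] [NormedSpace ℝ Z]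
    [NormedAddCommGroup X'] [NormedSpace ℝ X'] [CompleteSpace X']
    [NormedAddCommGroup Z'] [NormedSpace ℝ Z'] [CompleteSpace Z']
    (ω : Z → Y) (i : Y →L[ℝ] X) (q : X →L[ℝ] Z) (hassoc : IsAssoc ω i q)
    (i' : Y →L[ℝ] X') (q' : X' →L[ℝ] Z') (hexact : IsExactSeq i' q')
    (T : X' →L[ℝ] X) (γ : Z' →L[ℝ] Z)
    (hcomm1 : ∀ y, T (i' y) = i y) (hcomm2 : ∀ x', q (T x') = γ (q' x')) :
    IsAssoc (fun z' => ω (γ z')) i' q' := by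
  obtain ⟨⟨hi, -, hker⟩, b, l, hb, hbM, hqb, -, hω⟩ := hassoc
  have hΦ : Function.Injective fun x' => (T x', q' x') :=
    injective_pair_of_comm (T := (T : X' →ₗ[ℝ] X)) hi hexact.2.2.ge hcomm1
  have hrange : Set.range (fun x' => (T x', q' x')) = {p : X × Z' | q p.1 = γ p.2} :=
    range_pair_eq_pullback (T := (T : X' →ₗ[ℝ] X)) hker.ge hexact.2.1
      hexact.apply_apply_eq_zero_s5 hcomm1 hcomm2
  have hclosed : IsClosed (Set.range fun x' => (T x', q' x')) := by
    rw [hrange]; exact isClosed_eq (by fun_prop) (by fun_prop)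
  have hlift : ∀ z', ∃ x', T x' = b (γ z') ∧ q' x' = z' := fun z' => by
    obtain ⟨x', hx'⟩ : (b (γ z'), z') ∈ Set.range fun x' => (T x', q' x') := by
      rw [hrange]; exact hqb (γ z')
    exact ⟨x', congrArg Prod.fst hx', congrArg Prod.snd hx'⟩
  choose b' hTb' hqb' using hlift
  set l' : Z' → X' := fun z' => b' z' - i' (ω (γ z'))
  have hTl' : ∀ z', T (l' z') = l (γ z') := fun z' => by simp [l', hTb', hcomm1, hω]
  have hql' : ∀ z', q' (l' z') = z' := fun z' => by
    simp [l', hqb', hexact.apply_apply_eq_zero_s5]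
  refine ⟨hexact, b', IsLinearMap.mk' l' (isLinearMap_of_pullback hΦ (l ∘ₗ γ) hTl' hql'),
    isHomog_of_pullback hΦ (hb.comp_continuousLinearMap γ) hTb' hqb',
    exists_bound_of_pullback hΦ hclosed (exists_bound_comp_continuousLinearMap hbM γ) hTb' hqb',
    hqb', hql', fun z' => ?_⟩
  simp [l']

/-- Pull-back lemma: in a commutative diagram with identity on `Y` and vertical
maps `T` and `γ`, the lower sequence is associated with `ωγ`. -/
theorem statement5 {Y X Z X' Z' : Type*}
    [NormedAddCommGroup Y] [NormedSpace ℝ Y] [CompleteSpace Y]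
    [NormedAddCommGroup X] [NormedSpace ℝ X] [CompleteSpace X]
    [NormedAddCommGroup Z] [NormedSpace ℝ Z] [CompleteSpace Z]
    [NormedAddCommGroup X'] [NormedSpace ℝ X'] [CompleteSpace X']
    [NormedAddCommGroup Z'] [NormedSpace ℝ Z'] [CompleteSpace Z']
    (ω : Z → Y) (i : Y →L[ℝ] X) (q : X →L[ℝ] Z) (hassoc : IsAssoc ω i q)
    (i' : Y →L[ℝ] X') (q' : X' →L[ℝ] Z') (hexact : IsExactSeq i' q')
    (T : X' →L[ℝ] X) (γ : Z' →L[ℝ] Z)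
    (hcomm1 : ∀ y, T (i' y) = i y) (hcomm2 : ∀ x', q (T x') = γ (q' x')) :
    IsAssoc (fun z' => ω (γ z')) i' q' :=
  statement5_general ω i q hassoc i' q' hexact T γ hcomm1 hcomm2

end
end

section
/- Given a commutative diagram of exact sequences 0 → Y →^i X →^q Z → 0 ≡ ω and 0 → Y' →^{i'} X' →^{q'} Z → 0 with vertical maps α : Y → Y', T : X → X' and identity on Z, the z-linear map ωq' is associated to the exact sequence 0 → Y →^d Y' ⊕ X →^m X' → 0, where d(y) = (−αy, i y) and m(y', x) = i'y' + Tx. -/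
/-!
Choose a bounded homogeneous selection `b` and a linear selection `l` of `q` with
`i ∘ ω = b - l`. For any selection `s` of `q`, the vector `x' - T (s (q' x'))` lies in
`ker q' = range i'`, so `x' ↦ (i'⁻¹ (x' - T (s (q' x'))), s (q' x'))` is a selection of
`m = i'.coprod T`; by the open mapping theorem `i'⁻¹` is bounded on `ker q'`, so this
construction preserves boundedness, homogeneity and linearity. Since `T ∘ i = i' ∘ α`, the
selections induced by `b` and `l` differ by `(-α (ω (q' x')), i (ω (q' x'))) = d (ω (q' x'))`.
-/

open scoped BigOperators

noncomputable section

open Function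

namespace IsExactSeq

variable {Y X Z : Type*} [NormedAddCommGroup Y] [NormedSpace ℝ Y]
  [NormedAddCommGroup X] [NormedSpace ℝ X] [NormedAddCommGroup Z] [NormedSpace ℝ Z]
  {i : Y →L[ℝ] X} {q : X →L[ℝ] Z}

theorem map_map_eq_zero (h : IsExactSeq i q) (y : Y) : q (i y) = 0 := by
  have : i y ∈ LinearMap.ker (q : X →ₗ[ℝ] Z) := h.2.2 ▸ LinearMap.mem_range_self _ y
  simpa using this

theorem exists_eq_of_map_eq_zero (h : IsExactSeq i q) {x : X} (hx : q x = 0) :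
    ∃ y, i y = x := by
  have : x ∈ LinearMap.range (i : Y →ₗ[ℝ] X) := h.2.2 ▸ hx
  simpa using this

-- The open mapping theorem, applied to `i` corestricted to `ker q`.
theorem exists_inverse_on_ker [CompleteSpace Y] [CompleteSpace X] (h : IsExactSeq i q) :
    ∃ σ : LinearMap.ker (q : X →ₗ[ℝ] Z) →L[ℝ] Y, ∀ w, i (σ w) = w := by
  set K := LinearMap.ker (q : X →ₗ[ℝ] Z)
  set j := i.codRestrict K h.map_map_eq_zero
  have hj_inj : Injective j := fun a b hab => h.1 (congrArg Subtype.val hab)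
  have hj_range : LinearMap.range (j : Y →ₗ[ℝ] K) = ⊤ := by
    refine LinearMap.range_eq_top.2 fun w => ?_
    obtain ⟨y, hy⟩ := h.exists_eq_of_map_eq_zero w.2
    exact ⟨y, Subtype.ext hy⟩
  set e := ContinuousLinearEquiv.ofBijective j (LinearMap.ker_eq_bot.2 hj_inj) hj_range
  exact ⟨e.symm, fun w => congrArg Subtype.val (e.apply_symm_apply w)⟩

variable {Y' X' : Type*} [NormedAddCommGroup Y'] [NormedSpace ℝ Y']
  [NormedAddCommGroup X'] [NormedSpace ℝ X'] {i' : Y' →L[ℝ] X'} {q' : X' →L[ℝ] Z}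
  {α : Y →L[ℝ] Y'} {T : X →L[ℝ] X'}

theorem prod_coprod (h : IsExactSeq i q) (h' : IsExactSeq i' q')
    (hcomm1 : ∀ y, T (i y) = i' (α y)) (hcomm2 : ∀ x, q' (T x) = q x) :
    IsExactSeq ((-α).prod i) (i'.coprod T) := by
  refine ⟨fun y₁ y₂ hy => h.1 (congrArg Prod.snd hy), fun x' => ?_, ?_⟩
  · obtain ⟨x, hx⟩ := h.2.1 (q' x')
    obtain ⟨y', hy'⟩ := h'.exists_eq_of_map_eq_zero (x := x' - T x) (by simp [hcomm2, hx])
    exact ⟨(y', x), by simp [hy']⟩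
  ext ⟨y', x⟩
  simp only [LinearMap.mem_range, LinearMap.mem_ker, ContinuousLinearMap.coe_coe,
    ContinuousLinearMap.prod_apply, ContinuousLinearMap.coprod_apply,
    neg_apply, Prod.mk.injEq]
  constructor
  · rintro ⟨y, rfl, rfl⟩
    simp [hcomm1]
  · intro hsum
    have hqx : q x = 0 := by
      simpa [h'.map_map_eq_zero, hcomm2] using congrArg q' hsum
    obtain ⟨y, rfl⟩ := h.exists_eq_of_map_eq_zero hqx
    refine ⟨y, h'.1 ?_, rfl⟩
    rw [map_neg, ← hcomm1]
    exact (eq_neg_of_add_eq_zero_left hsum).symm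

end IsExactSeq

section CoprodSection

variable {Y X Z Y' X' : Type*} [NormedAddCommGroup Y] [NormedSpace ℝ Y]
  [NormedAddCommGroup X] [NormedSpace ℝ X] [NormedAddCommGroup Z] [NormedSpace ℝ Z]
  [NormedAddCommGroup Y'] [NormedSpace ℝ Y'] [NormedAddCommGroup X'] [NormedSpace ℝ X']
  {q : X →L[ℝ] Z} {i' : Y' →L[ℝ] X'} {q' : X' →L[ℝ] Z} {T : X →L[ℝ] X'}
  (σ : LinearMap.ker (q' : X' →ₗ[ℝ] Z) →L[ℝ] Y') {s : Z → X}

theorem sub_map_section_mem_ker (hcomm2 : ∀ x, q' (T x) = q x) (hs : ∀ z, q (s z) = z)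
    (x' : X') :
    x' - T (s (q' x')) ∈ LinearMap.ker (q' : X' →ₗ[ℝ] Z) := by
  simp [hcomm2, hs]

def coprodSection (hcomm2 : ∀ x, q' (T x) = q x) (hs : ∀ z, q (s z) = z) (x' : X') :
    Y' × X :=
  (σ ⟨x' - T (s (q' x')), sub_map_section_mem_ker hcomm2 hs x'⟩, s (q' x'))

theorem coprod_coprodSection (hσ : ∀ w, i' (σ w) = w) (hcomm2 : ∀ x, q' (T x) = q x)
    (hs : ∀ z, q (s z) = z) (x' : X') : i'.coprod T (coprodSection σ hcomm2 hs x') = x' := by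
  simp [coprodSection, hσ]

theorem isHomog_coprodSection (hcomm2 : ∀ x, q' (T x) = q x) (hs : ∀ z, q (s z) = z)
    (hhom : IsHomog s) : IsHomog (coprodSection σ hcomm2 hs) := by
  intro c x'
  refine Prod.ext ?_ (by simp [coprodSection, hhom c])
  simp only [coprodSection, Prod.smul_fst, ← map_smul]
  congr 1
  ext
  simp [hhom c, smul_sub]

theorem exists_bound_coprodSection (hcomm2 : ∀ x, q' (T x) = q x) (hs : ∀ z, q (s z) = z)
    {M : ℝ} (hM : ∀ z, ‖s z‖ ≤ M * ‖z‖) :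
    ∃ M' : ℝ, ∀ x', ‖coprodSection σ hcomm2 hs x'‖ ≤ M' * ‖x'‖ := by
  obtain ⟨N, hN, hsq⟩ : ∃ N ≥ 0, ∀ x', ‖s (q' x')‖ ≤ N * ‖x'‖ := by
    refine ⟨max M 0 * ‖q'‖, by positivity, fun x' => ?_⟩
    calc ‖s (q' x')‖ ≤ max M 0 * ‖q' x'‖ := (hM _).trans (by gcongr; exact le_max_left _ _)
      _ ≤ max M 0 * (‖q'‖ * ‖x'‖) := by gcongr; exact q'.le_opNorm x'
      _ = max M 0 * ‖q'‖ * ‖x'‖ := by ring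
  have hsub (x' : X') : ‖x' - T (s (q' x'))‖ ≤ (1 + ‖T‖ * N) * ‖x'‖ :=
    calc ‖x' - T (s (q' x'))‖ ≤ ‖x'‖ + ‖T‖ * ‖s (q' x')‖ :=
          (norm_sub_le _ _).trans (by gcongr; exact T.le_opNorm _)
      _ ≤ ‖x'‖ + ‖T‖ * (N * ‖x'‖) := by gcongr; exact hsq x'
      _ = (1 + ‖T‖ * N) * ‖x'‖ := by ring
  have hC : 0 ≤ ‖σ‖ * (1 + ‖T‖ * N) := by positivity
  refine ⟨‖σ‖ * (1 + ‖T‖ * N) + N, fun x' => norm_prod_le_iff.2 ⟨?_, ?_⟩⟩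
  · calc ‖σ _‖ ≤ ‖σ‖ * ‖x' - T (s (q' x'))‖ := σ.le_opNorm _
      _ ≤ ‖σ‖ * ((1 + ‖T‖ * N) * ‖x'‖) := by gcongr; exact hsub x'
      _ ≤ (‖σ‖ * (1 + ‖T‖ * N) + N) * ‖x'‖ := by nlinarith [norm_nonneg x']
  · exact (hsq x').trans (by gcongr; linarith)

def coprodSectionₗ (hcomm2 : ∀ x, q' (T x) = q x) (l : Z →ₗ[ℝ] X) (hl : ∀ z, q (l z) = z) :
    X' →ₗ[ℝ] Y' × X where
  toFun := coprodSection σ hcomm2 hl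
  map_add' x' y' := by
    refine Prod.ext ?_ (by simp [coprodSection])
    simp only [coprodSection, Prod.fst_add, ← map_add]
    congr 1
    ext
    simp only [map_add, Submodule.coe_add]
    abel
  map_smul' := isHomog_coprodSection σ hcomm2 hl fun c z => l.map_smul c z

theorem coprodSection_sub_coprodSection {Y : Type*} [NormedAddCommGroup Y] [NormedSpace ℝ Y]
    {i : Y →L[ℝ] X} {α : Y →L[ℝ] Y'} (hσ : ∀ w, i' (σ w) = w) (hi' : Injective i')
    (hcomm1 : ∀ y, T (i y) = i' (α y)) (hcomm2 : ∀ x, q' (T x) = q x) {b : Z → X}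
    (hb : ∀ z, q (b z) = z) (hs : ∀ z, q (s z) = z) {ω : Z → Y} (hω : ∀ z, i (ω z) = b z - s z)
    (x' : X') :
    coprodSection σ hcomm2 hb x' - coprodSection σ hcomm2 hs x' = (-α).prod i (ω (q' x')) := by
  refine Prod.ext (hi' ?_) (by simp [coprodSection, hω])
  simp [coprodSection, hσ, ← hcomm1, hω]

end CoprodSection

theorem statement6_general {Y X Z Y' X' : Type*}
    [NormedAddCommGroup Y] [NormedSpace ℝ Y]
    [NormedAddCommGroup X] [NormedSpace ℝ X]
    [NormedAddCommGroup Z] [NormedSpace ℝ Z]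
    [NormedAddCommGroup Y'] [NormedSpace ℝ Y'] [CompleteSpace Y']
    [NormedAddCommGroup X'] [NormedSpace ℝ X'] [CompleteSpace X']
    (ω : Z → Y) (i : Y →L[ℝ] X) (q : X →L[ℝ] Z) (hassoc : IsAssoc ω i q)
    (i' : Y' →L[ℝ] X') (q' : X' →L[ℝ] Z) (hexact : IsExactSeq i' q')
    (α : Y →L[ℝ] Y') (T : X →L[ℝ] X')
    (hcomm1 : ∀ y, T (i y) = i' (α y)) (hcomm2 : ∀ x, q' (T x) = q x) :
    IsAssoc (fun x' : X' => ω (q' x'))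
      (ContinuousLinearMap.prod (-α) i) (ContinuousLinearMap.coprod i' T) := by
  obtain ⟨hexact₀, b, l, hb_hom, ⟨M, hM⟩, hqb, hql, hω⟩ := hassoc
  obtain ⟨σ, hσ⟩ := hexact.exists_inverse_on_ker
  exact ⟨hexact₀.prod_coprod hexact hcomm1 hcomm2,
    coprodSection σ hcomm2 hqb, coprodSectionₗ σ hcomm2 l hql,
    isHomog_coprodSection σ hcomm2 hqb hb_hom,
    exists_bound_coprodSection σ hcomm2 hqb hM,
    coprod_coprodSection σ hσ hcomm2 hqb,
    coprod_coprodSection σ hσ hcomm2 hql,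
    fun x' => (coprodSection_sub_coprodSection σ hσ hexact.1 hcomm1 hcomm2 hqb hql hω x').symm⟩

/-- Diagonal sequence of a push-out diagram: `ωq'` is associated with the exact
sequence `0 → Y → Y' ⊕ X → X' → 0` where `d y = (−αy, i y)` and
`m (y', x) = i' y' + T x`. -/
theorem statement6 {Y X Z Y' X' : Type*}
    [NormedAddCommGroup Y] [NormedSpace ℝ Y] [CompleteSpace Y]
    [NormedAddCommGroup X] [NormedSpace ℝ X] [CompleteSpace X]
    [NormedAddCommGroup Z] [NormedSpace ℝ Z] [CompleteSpace Z]
    [NormedAddCommGroup Y'] [NormedSpace ℝ Y'] [CompleteSpace Y']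
    [NormedAddCommGroup X'] [NormedSpace ℝ X'] [CompleteSpace X']
    (ω : Z → Y) (i : Y →L[ℝ] X) (q : X →L[ℝ] Z) (hassoc : IsAssoc ω i q)
    (i' : Y' →L[ℝ] X') (q' : X' →L[ℝ] Z) (hexact : IsExactSeq i' q')
    (α : Y →L[ℝ] Y') (T : X →L[ℝ] X')
    (hcomm1 : ∀ y, T (i y) = i' (α y)) (hcomm2 : ∀ x, q' (T x) = q x) :
    IsAssoc (fun x' : X' => ω (q' x'))
      (ContinuousLinearMap.prod (-α) i) (ContinuousLinearMap.coprod i' T) :=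
  statement6_general ω i q hassoc i' q' hexact α T hcomm1 hcomm2

end
end

section
/- An exact sequence of Banach spaces 0 → Y → X → Z → 0 locally splits if and only if its bidual sequence 0 → Y** → X** → Z** → 0 splits. -/
open scoped BigOperators

noncomputable section

/-- The dual map (adjoint) of a continuous linear map between Banach spaces. -/
noncomputable def dualMapCLM {A B : Type*} [NormedAddCommGroup A] [NormedSpace ℝ A]
    [NormedAddCommGroup B] [NormedSpace ℝ B] (f : A →L[ℝ] B) :
    StrongDual ℝ B →L[ℝ] StrongDual ℝ A :=
  (ContinuousLinearMap.compL ℝ A B ℝ).flip f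

/-!
Dualising a short exact sequence of Banach spaces whose quotient map is onto gives an exact
sequence again: a functional vanishing on `ker q` factors boundedly through `q` by the open
mapping theorem. By Hahn–Banach `i*` is onto, so the bidual sequence is exact as well, and in
all three sequences the embedding is injective and the first space is complete.

In such a sequence `0 → A →j B →p C → 0`, a bounded right inverse `r` of `p` gives a bounded
left inverse of `j`: the projection `id - r ∘ p` lands in the closed subspace `range j = ker p`,
on which `j⁻¹` is bounded. Thus a section `s` of `i*` yields a left inverse `u` of `q*`, and `u*`
is a section of `q**`. Conversely a section of `q**` yields a left inverse `u` of `i**`; then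
`g ↦ g ∘ u ∘ ι_X`, i.e. `(u ∘ ι_X)* ∘ ι_{Y*}`, is a section of `i*`, since `ι_X ∘ i = i** ∘ ι_Y`.
-/

open ContinuousLinearMap NormedSpace

theorem dualMapCLM_injective {A B : Type*} [NormedAddCommGroup A] [NormedSpace ℝ A]
    [NormedAddCommGroup B] [NormedSpace ℝ B] {f : A →L[ℝ] B} (hf : Function.Surjective f) :
    Function.Injective (dualMapCLM f) := by
  intro φ ψ h
  ext b
  obtain ⟨a, rfl⟩ := hf b
  exact congr($h a)

theorem dualMapCLM_surjective {A B : Type*} [NormedAddCommGroup A] [NormedSpace ℝ A]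
    [CompleteSpace A] [NormedAddCommGroup B] [NormedSpace ℝ B] [CompleteSpace B]
    {f : A →L[ℝ] B} (hf : Function.Injective f) (hclosed : IsClosed (Set.range f)) :
    Function.Surjective (dualMapCLM f) := by
  intro g
  obtain ⟨φ, hφ, -⟩ := exists_extension_norm_eq _
    (g ∘L ((f.equivRange hf hclosed).symm : LinearMap.range (f : A →ₗ[ℝ] B) →L[ℝ] A))
  refine ⟨φ, ContinuousLinearMap.ext fun a => ?_⟩
  simpa [dualMapCLM] using hφ ⟨f a, a, rfl⟩

theorem exists_dualMapCLM_eq_of_ker_le {B C : Type*} [NormedAddCommGroup B] [NormedSpace ℝ B]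
    [NormedAddCommGroup C] [NormedSpace ℝ C] {p : B →L[ℝ] C} (σ : p.NonlinearRightInverse)
    (f : StrongDual ℝ B) (hf : ∀ b, p b = 0 → f b = 0) :
    ∃ g, dualMapCLM p g = f := by
  have hsurj : Function.Surjective p := fun c => ⟨σ c, σ.right_inv c⟩
  obtain ⟨ψ, hψ⟩ : (f : Module.Dual ℝ B) ∈ LinearMap.range (p : B →ₗ[ℝ] C).dualMap := by
    rw [LinearMap.range_dualMap_eq_dualAnnihilator_ker_of_surjective _ hsurj,
      Submodule.mem_dualAnnihilator]
    exact hf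
  have hψp : ∀ b, ψ (p b) = f b := LinearMap.congr_fun hψ
  refine ⟨ψ.mkContinuous (‖f‖ * σ.nnnorm) fun c => ?_, ContinuousLinearMap.ext hψp⟩
  calc ‖ψ c‖ = ‖f (σ c)‖ := by rw [← hψp, σ.right_inv]
    _ ≤ ‖f‖ * (σ.nnnorm * ‖c‖) := (f.le_opNorm _).trans (by gcongr; exact σ.bound c)
    _ = ‖f‖ * σ.nnnorm * ‖c‖ := by ring

theorem Function.Exact.dualMapCLM {A B C : Type*} [NormedAddCommGroup A] [NormedSpace ℝ A]
    [NormedAddCommGroup B] [NormedSpace ℝ B] [CompleteSpace B]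
    [NormedAddCommGroup C] [NormedSpace ℝ C] [CompleteSpace C]
    {j : A →L[ℝ] B} {p : B →L[ℝ] C} (h : Function.Exact j p) (hp : Function.Surjective p) :
    Function.Exact (dualMapCLM p) (dualMapCLM j) := by
  obtain ⟨σ, -⟩ := p.exists_nonlinearRightInverse_of_surjective (LinearMap.range_eq_top.2 hp)
  intro f
  constructor
  · intro hf
    refine exists_dualMapCLM_eq_of_ker_le σ f fun b hb => ?_
    obtain ⟨a, rfl⟩ := (h b).1 hb
    exact congr($hf a)
  · rintro ⟨g, rfl⟩
    ext a
    exact (congrArg g (h.apply_apply_eq_zero a)).trans g.map_zero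

theorem Function.Exact.isClosed_range {A B C : Type*} [TopologicalSpace B] [TopologicalSpace C]
    [T1Space C] [Zero C] {j : A → B} {p : B → C} (h : Function.Exact j p) (hp : Continuous p) :
    IsClosed (Set.range j) := by
  have : Set.range j = p ⁻¹' {0} := Set.ext fun b => (h b).symm
  exact this ▸ isClosed_singleton.preimage hp

theorem Function.Exact.exists_leftInverse_of_rightInverse {𝕜 A B C : Type*}
    [NontriviallyNormedField 𝕜] [NormedAddCommGroup A] [NormedSpace 𝕜 A] [CompleteSpace A]
    [NormedAddCommGroup B] [NormedSpace 𝕜 B] [CompleteSpace B]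
    [NormedAddCommGroup C] [NormedSpace 𝕜 C]
    {j : A →L[𝕜] B} {p : B →L[𝕜] C} (h : Function.Exact j p) (hj : Function.Injective j)
    (r : C →L[𝕜] B) (hr : ∀ c, p (r c) = c) :
    ∃ u : B →L[𝕜] A, ∀ a, u (j a) = a := by
  have hclosed := h.isClosed_range p.continuous
  let P : B →L[𝕜] B := ContinuousLinearMap.id 𝕜 B - r ∘L p
  have hP : ∀ b, P b ∈ LinearMap.range (j : A →ₗ[𝕜] B) := fun b =>
    (h (P b)).1 (by simp [P, hr])
  refine ⟨(j.equivRange hj hclosed).symm ∘L P.codRestrict _ hP, fun a => ?_⟩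
  have hPj : P.codRestrict _ hP (j a) = ⟨j a, a, rfl⟩ :=
    Subtype.ext (by simp [P, h.apply_apply_eq_zero])
  rw [ContinuousLinearMap.comp_apply, hPj]
  exact equivRange_symm_apply hj hclosed a

/-- Kalton: an exact sequence locally splits iff its bidual sequence splits. -/
theorem statement8 {Y X Z : Type*}
    [NormedAddCommGroup Y] [NormedSpace ℝ Y] [CompleteSpace Y]
    [NormedAddCommGroup X] [NormedSpace ℝ X] [CompleteSpace X]
    [NormedAddCommGroup Z] [NormedSpace ℝ Z] [CompleteSpace Z]
    (i : Y →L[ℝ] X) (q : X →L[ℝ] Z) (hexact : IsExactSeq i q) :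
    LocSplits i q ↔
      Splits (dualMapCLM (dualMapCLM i)) (dualMapCLM (dualMapCLM q)) := by
  obtain ⟨hinj, hsurj, hker⟩ := hexact
  have hexact : Function.Exact i q := LinearMap.exact_iff.2 hker.symm
  have hdual := hexact.dualMapCLM hsurj
  have hi_dual_surj := dualMapCLM_surjective hinj (hexact.isClosed_range q.continuous)
  have hbidual := hdual.dualMapCLM hi_dual_surj
  constructor
  · rintro ⟨s, hs⟩
    obtain ⟨u, hu⟩ := hdual.exists_leftInverse_of_rightInverse (dualMapCLM_injective hsurj) s
      fun g => ContinuousLinearMap.ext (hs g)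
    exact ⟨dualMapCLM u, fun ζ => ContinuousLinearMap.ext fun g => congrArg ζ (hu g)⟩
  · rintro ⟨r, hr⟩
    obtain ⟨u, hu⟩ :=
      hbidual.exists_leftInverse_of_rightInverse (dualMapCLM_injective hi_dual_surj) r hr
    refine ⟨dualMapCLM (u ∘L inclusionInDoubleDual ℝ X) ∘L
      inclusionInDoubleDual ℝ (StrongDual ℝ Y), fun g y => ?_⟩
    exact congr($(hu (inclusionInDoubleDual ℝ Y y)) g)
end
end

section
/- Let 0 → Y → X → E → 0 be an exact sequence of Banach spaces in which E is an L₁-space and X has the bounded approximation property. Then Y has the bounded approximation property. -/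
open scoped BigOperators

noncomputable section

/-! Given a finite-dimensional `F ⊆ Y`, take a finite-rank `S` on `X` of norm at most `μ` fixing
`i F`. Since `E` is an `𝓛₁`-space, the finite-dimensional space `q (range S)` sits inside a
subspace uniformly isomorphic to some `ℓ₁ⁿ`, and `ℓ₁ⁿ` lifts through `q` with the open-mapping
constant; so `q (range S)` has a lift `u` with `‖u‖ ≤ K`, where `K` does not depend on `F`.
Then `S - u q S` has finite rank, values in `ker q = i Y`, norm at most `μ (1 + K ‖q‖)`, and
fixes `i F`; pulling it back along `Y ≃ i Y` gives the BAP of `Y`. -/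

section

variable {X E : Type*} [NormedAddCommGroup X] [NormedSpace ℝ X]
  [NormedAddCommGroup E] [NormedSpace ℝ E]

def HasLocalLiftsWith (q : X →L[ℝ] E) (K : ℝ) : Prop :=
  ∀ G : Submodule ℝ E, FiniteDimensional ℝ G → ∃ u : G →L[ℝ] X, (∀ e, q (u e) = e) ∧ ‖u‖ ≤ K

theorem ContinuousLinearMap.exists_lift_piLp_one {ι : Type*} [Fintype ι] (q : X →L[ℝ] E)
    {C : ℝ} (hC0 : 0 ≤ C) (hC : ∀ e, ∃ x, q x = e ∧ ‖x‖ ≤ C * ‖e‖)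
    (f : PiLp 1 (fun _ : ι => ℝ) →L[ℝ] E) :
    ∃ u : PiLp 1 (fun _ : ι => ℝ) →L[ℝ] X, q.comp u = f ∧ ‖u‖ ≤ C * ‖f‖ := by
  classical
  choose x hqx hx using fun j => hC (f (PiLp.basisFun 1 ℝ ι j))
  have hxf (j : ι) : ‖x j‖ ≤ C * ‖f‖ := by
    refine (hx j).trans (mul_le_mul_of_nonneg_left ?_ hC0)
    simpa using f.le_opNorm (PiLp.basisFun 1 ℝ ι j)
  refine ⟨∑ j, (PiLp.proj 1 (fun _ : ι => ℝ) j).smulRight (x j), ?_, ?_⟩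
  · refine ContinuousLinearMap.coe_injective <| (PiLp.basisFun 1 ℝ ι).ext fun j => ?_
    simp [hqx]
  · refine ContinuousLinearMap.opNorm_le_bound _ (by positivity) fun z => ?_
    calc ‖(∑ j, (PiLp.proj 1 (fun _ : ι => ℝ) j).smulRight (x j)) z‖
        = ‖∑ j, z j • x j‖ := by simp
      _ ≤ ∑ j, ‖z j‖ * (C * ‖f‖) := norm_sum_le_of_le _ fun j _ => by
          rw [norm_smul]; exact mul_le_mul_of_nonneg_left (hxf j) (norm_nonneg _)
      _ = C * ‖f‖ * ‖z‖ := by rw [PiLp.norm_eq_of_L1, ← Finset.sum_mul, mul_comm]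

theorem IsL1Space.exists_hasLocalLiftsWith [CompleteSpace X] [CompleteSpace E] (hE : IsL1Space E)
    {q : X →L[ℝ] E} (hq : Function.Surjective q) : ∃ K, HasLocalLiftsWith q K := by
  obtain ⟨C, hC0, hC⟩ := q.exists_preimage_norm_le hq
  obtain ⟨l, -, hl⟩ := hE
  refine ⟨C * l, fun F hF => ?_⟩
  obtain ⟨G, hFG, -, n, T, hT⟩ := hl F hF
  obtain ⟨v, hqv, hv⟩ :=
    q.exists_lift_piLp_one hC0.le hC (G.subtypeL.comp T.symm.toContinuousLinearMap)
  set incl : F →L[ℝ] G := F.subtypeL.codRestrict G fun x => hFG x.2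
  refine ⟨v.comp (T.toContinuousLinearMap.comp incl), fun e => ?_, ?_⟩
  · simpa [incl] using congr($hqv (T (incl e)))
  have hincl : ‖incl‖ ≤ 1 :=
    ContinuousLinearMap.opNorm_le_bound _ zero_le_one fun x => by simp [incl]
  have hsub : ‖G.subtypeL.comp T.symm.toContinuousLinearMap‖ ≤ ‖T.symm.toContinuousLinearMap‖ :=
    (ContinuousLinearMap.opNorm_comp_le _ _).trans
      (mul_le_of_le_one_left (norm_nonneg _) (Submodule.norm_subtypeL_le G))
  calc ‖v.comp (T.toContinuousLinearMap.comp incl)‖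
      ≤ ‖v‖ * (‖T.toContinuousLinearMap‖ * ‖incl‖) :=
        (ContinuousLinearMap.opNorm_comp_le _ _).trans
          (mul_le_mul_of_nonneg_left (ContinuousLinearMap.opNorm_comp_le _ _) (norm_nonneg _))
    _ ≤ C * ‖T.symm.toContinuousLinearMap‖ * (‖T.toContinuousLinearMap‖ * 1) := by
        gcongr
        exact hv.trans (mul_le_mul_of_nonneg_left hsub hC0.le)
    _ ≤ C * l := by
        rw [mul_one, mul_assoc, mul_comm ‖T.symm.toContinuousLinearMap‖]
        exact mul_le_mul_of_nonneg_left hT hC0.le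

theorem HasBAPWith.mono {l l' : ℝ} (h : HasBAPWith X l) (hl : l ≤ l') : HasBAPWith X l' :=
  fun F hF => (h F hF).imp fun _ ⟨hfin, hT, hfix⟩ => ⟨hfin, hT.trans hl, hfix⟩

theorem HasBAPWith.hasBAP {l : ℝ} (h : HasBAPWith X l) : HasBAP X :=
  ⟨max 1 l, le_max_left _ _, h.mono (le_max_right _ _)⟩

theorem HasBAPWith.of_equiv {l : ℝ} (e : X ≃L[ℝ] E) (h : HasBAPWith E l) :
    HasBAPWith X (‖(e.symm : E →L[ℝ] X)‖ * l * ‖(e : X →L[ℝ] E)‖) := by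
  intro F hF
  obtain ⟨T, hfin, hT, hfix⟩ := h (F.map (e : X →ₗ[ℝ] E)) inferInstance
  refine ⟨(e.symm : E →L[ℝ] X).comp (T.comp (e : X →L[ℝ] E)), ?_, ?_, fun x hx => ?_⟩
  · have : FiniteDimensional ℝ (LinearMap.range (T.comp (e : X →L[ℝ] E) : X →ₗ[ℝ] E)) :=
      Submodule.finiteDimensional_of_le (LinearMap.range_comp_le_range _ _)
    rw [ContinuousLinearMap.toLinearMap_comp, LinearMap.range_comp]
    infer_instance
  · calc _ ≤ ‖(e.symm : E →L[ℝ] X)‖ * (‖T‖ * ‖(e : X →L[ℝ] E)‖) :=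
          (ContinuousLinearMap.opNorm_comp_le _ _).trans
            (mul_le_mul_of_nonneg_left (ContinuousLinearMap.opNorm_comp_le _ _) (norm_nonneg _))
      _ ≤ _ := by rw [← mul_assoc]; gcongr
  · simp [hfix (e x) (Submodule.mem_map_of_mem hx)]


theorem Submodule.hasBAPWith_of_approx {μ : ℝ} (K : Submodule ℝ X)
    (h : ∀ F : Submodule ℝ X, FiniteDimensional ℝ F → F ≤ K →
      ∃ A : X →L[ℝ] X, FiniteDimensional ℝ (LinearMap.range (A : X →ₗ[ℝ] X)) ∧
        ‖A‖ ≤ μ ∧ (∀ x ∈ F, A x = x) ∧ ∀ x, A x ∈ K) :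
    HasBAPWith K μ := by
  intro F hF
  obtain ⟨A, hfin, hA, hAF, hAK⟩ := h (F.map K.subtype) inferInstance (K.map_subtype_le F)
  set T : K →L[ℝ] K := (A.comp K.subtypeL).codRestrict K fun x => hAK x
  refine ⟨T, ?_, ?_, fun x hx => Subtype.ext (hAF x (Submodule.mem_map_of_mem hx))⟩
  · have : FiniteDimensional ℝ ((LinearMap.range (T : K →ₗ[ℝ] K)).map K.subtype) :=
      Submodule.finiteDimensional_of_le <| by
        rintro _ ⟨_, ⟨x, rfl⟩, rfl⟩
        exact LinearMap.mem_range.2 ⟨x.1, rfl⟩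
    exact LinearEquiv.finiteDimensional
      (Submodule.equivMapOfInjective _ K.injective_subtype _).symm
  · refine ContinuousLinearMap.opNorm_le_bound _ ((norm_nonneg A).trans hA) fun x => ?_
    calc ‖T x‖ = ‖A x‖ := rfl
      _ ≤ μ * ‖x‖ := A.le_of_opNorm_le hA x

theorem HasBAPWith.exists_approx_into_ker {μ K : ℝ} (hX : HasBAPWith X μ) (q : X →L[ℝ] E)
    (hlift : HasLocalLiftsWith q K) (F : Submodule ℝ X) [FiniteDimensional ℝ F]
    (hF : F ≤ LinearMap.ker (q : X →ₗ[ℝ] E)) :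
    ∃ A : X →L[ℝ] X, FiniteDimensional ℝ (LinearMap.range (A : X →ₗ[ℝ] X)) ∧
      ‖A‖ ≤ μ * (1 + K * ‖q‖) ∧ (∀ x ∈ F, A x = x) ∧ ∀ x, q (A x) = 0 := by
  obtain ⟨S, hSfin, hS, hSF⟩ := hX F inferInstance
  have hμ : 0 ≤ μ := (norm_nonneg S).trans hS
  set G := (LinearMap.range (S : X →ₗ[ℝ] X)).map (q : X →ₗ[ℝ] E)
  obtain ⟨u, hqu, hu⟩ := hlift G inferInstance
  set qS : X →L[ℝ] G := (q.comp S).codRestrict G fun x => ⟨S x, ⟨x, rfl⟩, rfl⟩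
  have hqS : ‖qS‖ ≤ ‖q‖ * μ :=
    ContinuousLinearMap.opNorm_le_bound _ (by positivity) fun x =>
      calc ‖qS x‖ = ‖q (S x)‖ := rfl
        _ ≤ ‖q‖ * (μ * ‖x‖) := q.le_of_opNorm_le le_rfl _ |>.trans
            (mul_le_mul_of_nonneg_left (S.le_of_opNorm_le hS x) (norm_nonneg q))
        _ = ‖q‖ * μ * ‖x‖ := by ring
  refine ⟨S - u.comp qS, ?_, ?_, fun x hx => ?_, fun x => ?_⟩
  · refine Submodule.finiteDimensional_of_le
      (S₂ := LinearMap.range (S : X →ₗ[ℝ] X) ⊔ LinearMap.range (u : G →ₗ[ℝ] X)) ?_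
    rintro _ ⟨x, rfl⟩
    exact Submodule.sub_mem _ (Submodule.mem_sup_left ⟨x, rfl⟩)
      (Submodule.mem_sup_right ⟨qS x, rfl⟩)
  · calc ‖S - u.comp qS‖ ≤ ‖S‖ + ‖u‖ * ‖qS‖ :=
          (norm_sub_le _ _).trans (add_le_add_right (u.opNorm_comp_le qS) _)
      _ ≤ μ + K * (‖q‖ * μ) :=
          add_le_add hS (mul_le_mul hu hqS (norm_nonneg qS) ((norm_nonneg u).trans hu))
      _ = μ * (1 + K * ‖q‖) := by ring
  · have hqSx : qS x = 0 := Subtype.ext <| show q (S x) = 0 by rw [hSF x hx]; exact hF hx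
    simp [hqSx, hSF x hx]
  · rw [sub_apply, map_sub, ContinuousLinearMap.comp_apply, hqu]
    exact sub_self _

theorem HasBAPWith.ker_of_hasLocalLiftsWith {μ K : ℝ} (hX : HasBAPWith X μ) (q : X →L[ℝ] E)
    (hlift : HasLocalLiftsWith q K) :
    HasBAPWith (LinearMap.ker (q : X →ₗ[ℝ] E)) (μ * (1 + K * ‖q‖)) :=
  Submodule.hasBAPWith_of_approx _ fun F _ hF => hX.exists_approx_into_ker q hlift F hF

end

/-- If `0 → Y → X → E → 0` is exact with `E` an `𝓛₁`-space and `X` has the BAP,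
then `Y` has the BAP. -/
theorem statement12 {Y X E : Type*}
    [NormedAddCommGroup Y] [NormedSpace ℝ Y] [CompleteSpace Y]
    [NormedAddCommGroup X] [NormedSpace ℝ X] [CompleteSpace X]
    [NormedAddCommGroup E] [NormedSpace ℝ E] [CompleteSpace E]
    (i : Y →L[ℝ] X) (q : X →L[ℝ] E) (hexact : IsExactSeq i q)
    (hE : IsL1Space E) (hX : HasBAP X) : HasBAP Y := by
  obtain ⟨hinj, hsurj, hrange⟩ := hexact
  obtain ⟨μ, -, hX⟩ := hX
  obtain ⟨K, hlift⟩ := hE.exists_hasLocalLiftsWith hsurj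
  have hker : HasBAPWith (LinearMap.range (i : Y →ₗ[ℝ] X)) (μ * (1 + K * ‖q‖)) :=
    hrange ▸ hX.ker_of_hasLocalLiftsWith q hlift
  have hclosed : IsClosed (Set.range i) := by
    rw [← ContinuousLinearMap.coe_coe i, ← LinearMap.coe_range, hrange]
    exact q.isClosed_ker
  exact (hker.of_equiv (i.equivRange hinj hclosed)).hasBAP

end
end

section
/- Let 0 → E → X → Z → 0 be an exact sequence of Banach spaces in which E is an L∞-space and X has the bounded approximation property. Then Z has the bounded approximation property. -/
open scoped BigOperators

noncomputable section

/-!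
Since `E` is an `𝓛∞`-space, `i(E)` is locally complemented in `X`, uniformly: given a
finite-dimensional `D ⊆ E` and a subspace `V ⊆ X` with `‖i e‖ ≤ c ‖i e + v‖`, the map
`i g + v ↦ g` on `i(G) ⊕ V`, for a finite-dimensional `G ⊇ D` that is `λ`-isomorphic to `ℓ∞ⁿ`,
extends by injectivity of `ℓ∞ⁿ` to `P : X → E` with `‖P‖ ≤ λ K c` (`K` an antilipschitz constant
of `i`), `P ∘ i = id` on `D` and `P = 0` on `V`. With `V = 0` and a `1/2`-net argument this
yields linear lifts `Λ : F → X` of the finite-dimensional subspaces `F ⊆ Z` with `‖Λ‖` bounded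
independently of `F`.

Given `F`, let `T` be a BAP operator on `X` fixing `Λ(F)`. An ultrafilter limit of `q T i P_D`
over finite-dimensional `D ⊆ E`, now with `V = Λ(F)`, is a bounded operator `R : X → q(T(X))`
with `R ∘ i = q T i` and `R ∘ Λ = 0`. Then `q T - R` vanishes on `i(E) = ker q`, so it equals
`S ∘ q` for a finite-rank `S : Z → Z` with uniformly bounded norm, and `S` fixes `F`.
-/

open Filter Topology Metric
open scoped NNReal

def IsLinftySpaceWith (E : Type*) [NormedAddCommGroup E] [NormedSpace ℝ E] (l : ℝ) : Prop :=
  ∀ F : Submodule ℝ E, FiniteDimensional ℝ F →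
    ∃ G : Submodule ℝ E, F ≤ G ∧ FiniteDimensional ℝ G ∧
      ∃ (n : ℕ) (T : G ≃L[ℝ] PiLp ⊤ fun _ : Fin n => ℝ),
        ‖T.toContinuousLinearMap‖ * ‖T.symm.toContinuousLinearMap‖ ≤ l

section

variable {E X Y Z : Type*} [NormedAddCommGroup E] [NormedSpace ℝ E]
  [NormedAddCommGroup X] [NormedSpace ℝ X] [NormedAddCommGroup Y] [NormedSpace ℝ Y]
  [NormedAddCommGroup Z] [NormedSpace ℝ Z]

theorem exists_extension_pi_norm_le {ι : Type*} [Fintype ι] (M : Submodule ℝ X)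
    (φ : M →L[ℝ] (ι → ℝ)) : ∃ u : X →L[ℝ] (ι → ℝ), (∀ m : M, u m = φ m) ∧ ‖u‖ ≤ ‖φ‖ := by
  have hcoord (k : ι) : ∃ g : StrongDual ℝ X, (∀ m : M, g m = φ m k) ∧ ‖g‖ ≤ ‖φ‖ := by
    obtain ⟨g, hg, hgn⟩ := exists_extension_norm_eq M ((ContinuousLinearMap.proj k).comp φ)
    refine ⟨g, hg, hgn ▸ ContinuousLinearMap.opNorm_le_bound _ φ.opNorm_nonneg fun m => ?_⟩
    exact (norm_le_pi_norm (φ m) k).trans (φ.le_opNorm m)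
  choose g hg hgn using hcoord
  exact ⟨ContinuousLinearMap.pi g, fun m => funext fun k => hg k m,
    ContinuousLinearMap.norm_pi_le_of_le hgn φ.opNorm_nonneg⟩

theorem exists_extension_of_equiv_piLp_top {ι : Type*} [Fintype ι]
    (T : Y ≃L[ℝ] PiLp ⊤ fun _ : ι => ℝ) (M : Submodule ℝ X) (φ : M →L[ℝ] Y) :
    ∃ u : X →L[ℝ] Y, (∀ m : M, u m = φ m) ∧
      ‖u‖ ≤ ‖T.toContinuousLinearMap‖ * ‖T.symm.toContinuousLinearMap‖ * ‖φ‖ := by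
  let J := PiLp.equivₗᵢ (𝕜 := ℝ) fun _ : ι => ℝ
  obtain ⟨v, hv, hvn⟩ := exists_extension_pi_norm_le M
    (J.toLinearIsometry.toContinuousLinearMap.comp (T.toContinuousLinearMap.comp φ))
  refine ⟨T.symm.toContinuousLinearMap.comp (J.symm.toLinearIsometry.toContinuousLinearMap.comp v),
    fun m => by simp [hv], ?_⟩
  rw [LinearIsometry.norm_toContinuousLinearMap_comp] at hvn
  grw [ContinuousLinearMap.opNorm_comp_le, LinearIsometry.norm_toContinuousLinearMap_comp, hvn,
    ContinuousLinearMap.opNorm_comp_le, ← mul_assoc, mul_comm ‖T.symm.toContinuousLinearMap‖]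

theorem IsLinftySpaceWith.nonneg {l : ℝ} (hE : IsLinftySpaceWith E l) : 0 ≤ l := by
  obtain ⟨_, _, _, _, T, hT⟩ := hE ⊥ inferInstance
  exact (mul_nonneg (ContinuousLinearMap.opNorm_nonneg _)
    (ContinuousLinearMap.opNorm_nonneg _)).trans hT

theorem exists_projection_map_sup {i : E →L[ℝ] X} {K : ℝ≥0} (hi : AntilipschitzWith K i)
    (G : Submodule ℝ E) {V : Submodule ℝ X} {c : ℝ} (hc : 0 ≤ c)
    (hV : ∀ e, ∀ v ∈ V, ‖i e‖ ≤ c * ‖i e + v‖) :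
    ∃ φ : ↥(G.map (i : E →ₗ[ℝ] X) ⊔ V) →L[ℝ] G, ‖φ‖ ≤ K * c ∧
      ∀ (g : G) (v : X), v ∈ V → ∀ m : ↥(G.map (i : E →ₗ[ℝ] X) ⊔ V),
        (m : X) = i g + v → φ m = g := by
  let f : X →ₗ.[ℝ] G :=
    ⟨G.map (i : E →ₗ[ℝ] X), (G.equivMapOfInjective _ hi.injective).symm.toLinearMap⟩
  have hf_apply (g : G) (h : i g ∈ f.domain) : f ⟨i g, h⟩ = g :=
    (LinearEquiv.symm_apply_eq _).2 rfl
  let f₀ : X →ₗ.[ℝ] G := ⟨V, 0⟩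
  have hf : ∀ (x : f.domain) (y : f₀.domain), (x : X) = y → f x = f₀ y := by
    rintro ⟨_, g, hg, rfl⟩ ⟨y, hy⟩ (hxy : i g = y)
    have : ‖i g‖ ≤ 0 := by simpa [hxy] using hV g (-y) (neg_mem hy)
    have hg0 : g = 0 := hi.injective (by simpa using this)
    subst hg0
    exact (hf_apply 0 _).trans (LinearMap.zero_apply _).symm
  let φ := f.sup f₀ hf
  have hφ (g : G) (v : X) (hv : v ∈ V) (m : ↥(G.map (i : E →ₗ[ℝ] X) ⊔ V))
      (hm : (m : X) = i g + v) : φ m = g := by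
    rw [LinearPMap.sup_apply hf ⟨i g, g, g.2, rfl⟩ ⟨v, hv⟩ m hm.symm]
    exact (congrArg₂ (· + ·) (hf_apply g _) (LinearMap.zero_apply _)).trans (add_zero g)
  have hbound (m : ↥(G.map (i : E →ₗ[ℝ] X) ⊔ V)) : ‖φ m‖ ≤ K * c * ‖m‖ := by
    obtain ⟨_, ⟨g, hg, rfl⟩, v, hv, hm⟩ := Submodule.mem_sup.1 m.2
    rw [hφ ⟨g, hg⟩ v hv m hm.symm, mul_assoc]
    calc ‖(⟨g, hg⟩ : G)‖ = ‖g‖ := rfl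
      _ ≤ K * ‖i g‖ := i.bound_of_antilipschitz hi g
      _ ≤ K * (c * ‖(m : X)‖) := by grw [hV g v hv, ← hm]; rfl
  exact ⟨φ.toFun.mkContinuous _ hbound, LinearMap.mkContinuous_norm_le _ (by positivity) _, hφ⟩

theorem exists_retraction_of_isLinftySpaceWith {l : ℝ} (hE : IsLinftySpaceWith E l)
    {i : E →L[ℝ] X} {K : ℝ≥0} (hi : AntilipschitzWith K i) {V : Submodule ℝ X} {c : ℝ}
    (hc : 0 ≤ c) (hV : ∀ e, ∀ v ∈ V, ‖i e‖ ≤ c * ‖i e + v‖)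
    (D : Submodule ℝ E) [FiniteDimensional ℝ D] :
    ∃ P : X →L[ℝ] E, ‖P‖ ≤ l * (K * c) ∧ (∀ e ∈ D, P (i e) = e) ∧ ∀ v ∈ V, P v = 0 := by
  obtain ⟨G, hDG, -, n, T, hT⟩ := hE D inferInstance
  obtain ⟨φ, hφ, hφ_apply⟩ := exists_projection_map_sup hi G hc hV
  obtain ⟨u, hu, hun⟩ := exists_extension_of_equiv_piLp_top T _ φ
  refine ⟨G.subtypeₗᵢ.toContinuousLinearMap.comp u, ?_, fun e he => ?_, fun v hv => ?_⟩
  · rw [LinearIsometry.norm_toContinuousLinearMap_comp]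
    grw [hun, hT, hφ]
    exact hE.nonneg
  · have hmem : i e ∈ G.map (i : E →ₗ[ℝ] X) ⊔ V := Submodule.mem_sup_left ⟨e, hDG he, rfl⟩
    simpa using congrArg Subtype.val ((hu ⟨_, hmem⟩).trans
      (hφ_apply ⟨e, hDG he⟩ 0 V.zero_mem _ (add_zero _).symm))
  · have hmem : v ∈ G.map (i : E →ₗ[ℝ] X) ⊔ V := Submodule.mem_sup_right hv
    simpa using congrArg Subtype.val ((hu ⟨_, hmem⟩).trans
      (hφ_apply 0 v hv _ (by simp)))

theorem ContinuousLinearMap.exists_linear_rightInverse (q : X →L[ℝ] Z)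
    (hq : Function.Surjective q) : ∃ g : Z →ₗ[ℝ] X, ∀ z, q (g z) = z :=
  ((q : X →ₗ[ℝ] Z).exists_rightInverse_of_surjective (LinearMap.range_eq_top.2 hq)).imp
    fun _ hg z => LinearMap.congr_fun hg z

theorem ContinuousLinearMap.opNorm_le_two_mul_of_half_net (f : X →L[ℝ] Y) {t : Set X}
    (ht : sphere (0 : X) 1 ⊆ ⋃ w ∈ t, ball w (1 / 2))
    {a : ℝ} (ha : 0 ≤ a) (hf : ∀ w ∈ t, ‖f w‖ ≤ a) : ‖f‖ ≤ 2 * a := by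
  suffices ‖f‖ ≤ a + ‖f‖ * (1 / 2) by linarith
  refine f.opNorm_le_of_unit_norm (by positivity) fun v hv => ?_
  obtain ⟨w, hw, hvw⟩ := Set.mem_iUnion₂.1 (ht (by simpa using hv))
  rw [mem_ball, dist_eq_norm] at hvw
  calc ‖f v‖ = ‖f w + f (v - w)‖ := by rw [map_sub, add_sub_cancel]
    _ ≤ a + ‖f‖ * (1 / 2) :=
      norm_add_le_of_le (hf w hw) (f.le_of_opNorm_le_of_le le_rfl hvw.le)

theorem exists_lift_norm_le {l : ℝ} (hE : IsLinftySpaceWith E l) {i : E →L[ℝ] X} {K : ℝ≥0}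
    (hi : AntilipschitzWith K i) {q : X →L[ℝ] Z}
    (hiq : LinearMap.range (i : E →ₗ[ℝ] X) = LinearMap.ker (q : X →ₗ[ℝ] Z))
    {cq : ℝ} (hcq : 0 ≤ cq) (hq : ∀ z, ∃ x, q x = z ∧ ‖x‖ ≤ cq * ‖z‖)
    (W : Submodule ℝ Z) [FiniteDimensional ℝ W] :
    ∃ Λ : W →L[ℝ] X, (∀ w, q (Λ w) = w) ∧ ‖Λ‖ ≤ 2 * ((1 + ‖i‖ * (l * K)) * cq) := by
  have hqi (e : E) : q (i e) = 0 := LinearMap.congr_fun (LinearMap.range_le_ker_iff.1 hiq.le) e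
  obtain ⟨g, hqg⟩ := q.exists_linear_rightInverse fun z => (hq z).imp fun _ h => h.1
  obtain ⟨t, ht_sphere, ht_fin, ht⟩ :=
    (isCompact_sphere (0 : W) 1).finite_cover_balls one_half_pos
  choose u hu hun using fun w : W => hq w
  have herr (w : W) : ∃ e, i e = g w - u w := by
    have : g w - u w ∈ LinearMap.ker (q : X →ₗ[ℝ] Z) := by simp [hqg, hu]
    rwa [← hiq] at this
  choose err herr using herr
  have : FiniteDimensional ℝ (Submodule.span ℝ (err '' t)) :=
    FiniteDimensional.span_of_finite ℝ (ht_fin.image err)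
  obtain ⟨P, hP, hPD, -⟩ := exists_retraction_of_isLinftySpaceWith hE hi (V := ⊥)
    zero_le_one (by simp) (Submodule.span ℝ (err '' t))
  rw [mul_one] at hP
  -- On a net point `w`, correcting the linear lift `g w` by `i (P (g w))` gives the same result
  -- as correcting the short lift `u w`, because `P` inverts `i` on the error `g w - u w`.
  let Λ₀ : W →ₗ[ℝ] X := g ∘ₗ W.subtype
  let Λ : W →L[ℝ] X := LinearMap.toContinuousLinearMap
    (Λ₀ - (i : E →ₗ[ℝ] X) ∘ₗ (P : X →ₗ[ℝ] E) ∘ₗ Λ₀)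
  have hΛ (w : W) : Λ w = g w - i (P (g w)) := rfl
  refine ⟨Λ, fun w => by simp [hΛ, hqi, hqg],
    Λ.opNorm_le_two_mul_of_half_net ht (by have := hE.nonneg; positivity) fun w hw => ?_⟩
  have hΛw : Λ w = u w - i (P (u w)) := by
    have hgw : g w = u w + i (err w) := by rw [herr]; abel
    rw [hΛ, hgw, map_add, map_add, hPD _ (Submodule.subset_span ⟨w, hw, rfl⟩)]
    abel
  have hu_le : ‖u w‖ ≤ cq := by
    have hw1 : ‖(w : Z)‖ = 1 := by simpa using ht_sphere hw
    simpa [hw1] using hun w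
  calc ‖Λ w‖ ≤ ‖u w‖ + ‖i‖ * (‖P‖ * ‖u w‖) := by
        rw [hΛw]; exact norm_sub_le_of_le le_rfl (i.le_opNorm_of_le (P.le_opNorm _))
    _ = (1 + ‖i‖ * ‖P‖) * ‖u w‖ := by ring
    _ ≤ (1 + ‖i‖ * (l * K)) * cq := by have := hE.nonneg; gcongr

theorem ContinuousLinearMap.exists_tendsto_ultrafilter {ι : Type*} [ProperSpace Y]
    (𝒰 : Ultrafilter ι) (f : ι → X →L[ℝ] Y) {C : ℝ} (hf : ∀ a, ‖f a‖ ≤ C) :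
    ∃ R : X →L[ℝ] Y, ‖R‖ ≤ C ∧ ∀ v, Tendsto (fun a => f a v) 𝒰 (𝓝 (R v)) := by
  have hb : Bornology.IsBounded (Set.range f) :=
    isBounded_iff_forall_norm_le.2 ⟨C, by rintro _ ⟨a, rfl⟩; exact hf a⟩
  obtain ⟨g, hg, hlim⟩ := (isCompact_closure_image_coe_of_bounded hb).ultrafilter_le_nhds
    (𝒰.map fun a => ⇑(f a)) (le_principal_iff.2 (mem_map.2 (univ_mem' fun a =>
      subset_closure (Set.mem_image_of_mem _ (Set.mem_range_self a)))))
  let R := ofMemClosureImageCoeBounded g hb hg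
  have hR (v : X) : Tendsto (fun a => f a v) 𝒰 (𝓝 (R v)) :=
    ((continuous_apply v).tendsto g).comp hlim
  obtain ⟨a⟩ := nonempty_of_neBot (𝒰 : Filter ι)
  exact ⟨R, R.opNorm_le_bound ((norm_nonneg _).trans (hf a)) fun v =>
    le_of_tendsto (hR v).norm (Eventually.of_forall fun a => (f a).le_of_opNorm_le (hf a) v), hR⟩

theorem exists_extension_vanishing_of_isLinftySpaceWith [FiniteDimensional ℝ Y] {l : ℝ}
    (hE : IsLinftySpaceWith E l)
    {i : E →L[ℝ] X} {K : ℝ≥0} (hi : AntilipschitzWith K i) {V : Submodule ℝ X} {c : ℝ}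
    (hc : 0 ≤ c) (hV : ∀ e, ∀ v ∈ V, ‖i e‖ ≤ c * ‖i e + v‖) (δ : E →L[ℝ] Y) :
    ∃ R : X →L[ℝ] Y, ‖R‖ ≤ l * (K * c) * ‖δ‖ ∧ (∀ e, R (i e) = δ e) ∧ ∀ v ∈ V, R v = 0 := by
  choose P hP hPi hPV using fun s : Finset E =>
    exists_retraction_of_isLinftySpaceWith hE hi hc hV (Submodule.span ℝ (s : Set E))
  -- Along `atTop` on `Finset E`, every `e` eventually lies in the subspace that `P s` retracts.
  let 𝒰 := Ultrafilter.of (atTop : Filter (Finset E))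
  obtain ⟨R, hR, hlim⟩ := ContinuousLinearMap.exists_tendsto_ultrafilter 𝒰
    (fun s => δ.comp (P s)) fun s => by
      grw [ContinuousLinearMap.opNorm_comp_le, hP s, mul_comm]
  refine ⟨R, hR, fun e => ?_, fun v hv => ?_⟩
  · have he : ∀ᶠ s in (𝒰 : Filter (Finset E)), δ e = δ (P s (i e)) :=
      Ultrafilter.of_le _ <| (eventually_ge_atTop {e}).mono fun s hs => by
        rw [hPi s e (Submodule.subset_span (hs (Finset.mem_singleton_self e)))]
    exact tendsto_nhds_unique (hlim (i e)) (tendsto_const_nhds.congr' he)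
  · refine tendsto_nhds_unique (hlim v) ?_
    simp only [ContinuousLinearMap.comp_apply, hPV _ v hv, map_zero, tendsto_const_nhds]

theorem exists_comp_eq_of_ker_le {q : X →L[ℝ] Z} {cq : ℝ} (hcq : 0 ≤ cq)
    (hq : ∀ z, ∃ x, q x = z ∧ ‖x‖ ≤ cq * ‖z‖) (B : X →L[ℝ] Y)
    (hB : LinearMap.ker (q : X →ₗ[ℝ] Z) ≤ LinearMap.ker (B : X →ₗ[ℝ] Y)) :
    ∃ S : Z →L[ℝ] Y, (∀ x, S (q x) = B x) ∧ ‖S‖ ≤ cq * ‖B‖ := by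
  obtain ⟨g, hg⟩ := q.exists_linear_rightInverse fun z => (hq z).imp fun _ h => h.1
  have hBg (x : X) : B (g (q x)) = B x := by
    have : g (q x) - x ∈ LinearMap.ker (q : X →ₗ[ℝ] Z) := by simp [hg]
    simpa [sub_eq_zero] using hB this
  have hbound (z : Z) : ‖B (g z)‖ ≤ ‖B‖ * cq * ‖z‖ := by
    obtain ⟨x, rfl, hx⟩ := hq z
    rw [hBg, mul_assoc]
    exact B.le_opNorm_of_le hx
  refine ⟨((B : X →ₗ[ℝ] Y) ∘ₗ g).mkContinuous _ hbound, hBg, ?_⟩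
  grw [LinearMap.mkContinuous_norm_le _ (by positivity), mul_comm]

theorem norm_le_mul_norm_add_of_mem_range_lift {q : X →L[ℝ] Z} {W : Submodule ℝ Z}
    {Λ : W →L[ℝ] X} (hΛ : ∀ w, q (Λ w) = w) {C : ℝ} (hC : ‖Λ‖ ≤ C) {x : X} (hx : q x = 0)
    {v : X} (hv : v ∈ LinearMap.range (Λ : W →ₗ[ℝ] X)) :
    ‖x‖ ≤ (1 + C * ‖q‖) * ‖x + v‖ := by
  obtain ⟨w, rfl⟩ := hv
  have hw : ‖w‖ ≤ ‖q‖ * ‖x + Λ w‖ := by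
    simpa [hx, hΛ] using q.le_opNorm (x + Λ w)
  calc ‖x‖ = ‖(x + Λ w) - Λ w‖ := by rw [add_sub_cancel_right]
    _ ≤ ‖x + Λ w‖ + C * (‖q‖ * ‖x + Λ w‖) :=
      norm_sub_le_of_le le_rfl (Λ.le_of_opNorm_le_of_le hC hw)
    _ = (1 + C * ‖q‖) * ‖x + Λ w‖ := by ring

theorem exists_approximation_of_lift {l : ℝ} (hE : IsLinftySpaceWith E l) {i : E →L[ℝ] X}
    {K : ℝ≥0} (hi : AntilipschitzWith K i) {q : X →L[ℝ] Z}
    (hiq : LinearMap.range (i : E →ₗ[ℝ] X) = LinearMap.ker (q : X →ₗ[ℝ] Z))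
    {cq : ℝ} (hcq : 0 ≤ cq) (hq : ∀ z, ∃ x, q x = z ∧ ‖x‖ ≤ cq * ‖z‖)
    {F : Submodule ℝ Z} {Λ : F →L[ℝ] X} (hqΛ : ∀ w, q (Λ w) = w) {C : ℝ} (hΛ : ‖Λ‖ ≤ C)
    (T : X →L[ℝ] X) [FiniteDimensional ℝ (LinearMap.range (T : X →ₗ[ℝ] X))]
    (hTΛ : ∀ x ∈ LinearMap.range (Λ : F →ₗ[ℝ] X), T x = x) :
    ∃ S : Z →L[ℝ] Z, FiniteDimensional ℝ (LinearMap.range (S : Z →ₗ[ℝ] Z)) ∧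
      ‖S‖ ≤ cq * (‖q‖ * ‖T‖ + l * (K * (1 + C * ‖q‖)) * (‖q‖ * ‖T‖ * ‖i‖)) ∧
      ∀ z ∈ F, S z = z := by
  have hqi (e : E) : q (i e) = 0 := LinearMap.congr_fun (LinearMap.range_le_ker_iff.1 hiq.le) e
  let Y := (LinearMap.range (T : X →ₗ[ℝ] X)).map (q : X →ₗ[ℝ] Z)
  let δ : E →L[ℝ] Y := ((q.comp T).comp i).codRestrict Y fun e =>
    ⟨T (i e), LinearMap.mem_range_self _ _, rfl⟩
  have hδ : ‖δ‖ ≤ ‖q‖ * ‖T‖ * ‖i‖ := by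
    refine δ.opNorm_le_bound (by positivity) fun e => ?_
    calc ‖δ e‖ = ‖q (T (i e))‖ := rfl
      _ ≤ ‖q‖ * (‖T‖ * (‖i‖ * ‖e‖)) := q.le_opNorm_of_le (T.le_opNorm_of_le (i.le_opNorm e))
      _ = ‖q‖ * ‖T‖ * ‖i‖ * ‖e‖ := by ring
  have hC : 0 ≤ C := Λ.opNorm_nonneg.trans hΛ
  obtain ⟨R, hR, hRi, hRΛ⟩ := exists_extension_vanishing_of_isLinftySpaceWith hE hi
    (by positivity) (fun e v hv => norm_le_mul_norm_add_of_mem_range_lift hqΛ hΛ (hqi e) hv) δ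
  let B := q.comp T - Y.subtypeL.comp R
  obtain ⟨S, hSq, hS⟩ := exists_comp_eq_of_ker_le hcq hq B <| by
    rw [← hiq]
    rintro _ ⟨e, rfl⟩
    exact sub_eq_zero.2 (congrArg Subtype.val (hRi e)).symm
  refine ⟨S, ?_, ?_, fun z hz => ?_⟩
  · refine Submodule.finiteDimensional_of_le (S₂ := Y) ?_
    rintro _ ⟨z, rfl⟩
    obtain ⟨x, rfl, -⟩ := hq z
    change S (q x) ∈ Y
    rw [hSq]
    exact Y.sub_mem ⟨T x, LinearMap.mem_range_self _ _, rfl⟩ (R x).2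
  · have hB : ‖B‖ ≤ ‖q‖ * ‖T‖ + l * (K * (1 + C * ‖q‖)) * (‖q‖ * ‖T‖ * ‖i‖) := by
      refine (norm_sub_le _ _).trans (add_le_add (q.opNorm_comp_le T) ?_)
      grw [ContinuousLinearMap.opNorm_comp_le, Submodule.norm_subtypeL_le, one_mul, hR, hδ]
      exact mul_nonneg hE.nonneg (by positivity)
    grw [hS, hB]
  · change S ((⟨z, hz⟩ : F) : Z) = (⟨z, hz⟩ : F)
    rw [← hqΛ ⟨z, hz⟩, hSq]
    change q (T (Λ _)) - (R (Λ _) : Z) = q (Λ _)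
    rw [hTΛ (Λ _) ⟨_, rfl⟩, hRΛ (Λ _) ⟨_, rfl⟩, ZeroMemClass.coe_zero, sub_zero]

end

/-- If `0 → E → X → Z → 0` is exact with `E` an `𝓛∞`-space and `X` has the BAP,
then `Z` has the BAP. -/
theorem statement14 {E X Z : Type*}
    [NormedAddCommGroup E] [NormedSpace ℝ E] [CompleteSpace E]
    [NormedAddCommGroup X] [NormedSpace ℝ X] [CompleteSpace X]
    [NormedAddCommGroup Z] [NormedSpace ℝ Z] [CompleteSpace Z]
    (i : E →L[ℝ] X) (q : X →L[ℝ] Z) (hexact : IsExactSeq i q)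
    (hE : IsLinftySpace E) (hX : HasBAP X) : HasBAP Z := by
  obtain ⟨hinj, hsurj, hiq⟩ := hexact
  obtain ⟨lE, hlE, hE⟩ := hE
  obtain ⟨l, -, hX⟩ := hX
  obtain ⟨K, hK⟩ := i.antilipschitz_of_injective_of_isClosed_range hinj <| by
    have : Set.range i = LinearMap.ker (q : X →ₗ[ℝ] Z) := by
      rw [← hiq, LinearMap.coe_range, ContinuousLinearMap.coe_coe]
    exact this ▸ q.isClosed_ker
  obtain ⟨cq, hcq, hq⟩ := q.exists_preimage_norm_le hsurj
  set C := 2 * ((1 + ‖i‖ * (lE * K)) * cq)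
  refine ⟨max 1 (cq * (‖q‖ * l + lE * (K * (1 + C * ‖q‖)) * (‖q‖ * l * ‖i‖))),
    le_max_left _ _, fun F hF => ?_⟩
  obtain ⟨Λ, hqΛ, hΛ⟩ := exists_lift_norm_le hE hK hiq hcq.le hq F
  obtain ⟨T, hTfin, hTl, hTΛ⟩ := hX (LinearMap.range (Λ : F →ₗ[ℝ] X)) inferInstance
  obtain ⟨S, hSfin, hS, hSF⟩ := exists_approximation_of_lift hE hK hiq hcq.le hq hqΛ hΛ T hTΛ
  refine ⟨S, hSfin, ?_, hSF⟩
  grw [hS, hTl]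
  exact le_max_right _ _

end
end
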